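/- arXiv:1705.00944 — 12 statements merged into one kernel-verified Lean document; each statement's English description precedes it below -/
import Mathlib

section
/- Every fixed point (x, y, w) of the one-patch COD1 system with nonnegative coordinates and N = x + y + w > 0 is one of the following three points: (ζ, 0, 0), (0, 0, ζ), or (δξ, ξ, δξ), where δ is the unique positive root of P(X) = X³ + (1/2)X² − (1/4)X − β/8 and ξ = (b(δ + β/2) − d)/((2δ + 1)c). -/
/-!
Clearing the denominator `N`, the three fixed-point equations say `b F = (d + c N) N u` for the
birth term `F` and the count `u` of each genotype. Hence `u F' = u' F` for any two genotypes.
With `y = 0` this forces `x w = 0`, leaving the two monomorphic points. With `y > 0`, comparing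
`AA` with `aa` gives `(x - w) (x w - y² / 4) = 0`; Hardy–Weinberg proportions `x w = y² / 4` are
incompatible with `AA` versus `Aa` when `β > 1`, so `x = w`, and then `AA` versus `Aa` is the
cubic `P(x / y) = 0` while the `Aa` equation is linear in `y`.
-/

noncomputable def birthAA (β x y : ℝ) : ℝ := β * x ^ 2 + ((β + 1) / 2) * x * y + (β / 4) * y ^ 2

noncomputable def birthAa (β x y w : ℝ) : ℝ :=
  (β / 2) * y ^ 2 + ((β + 1) / 2) * y * (x + w) + 2 * x * w

/-- The fixed-point equations of the one-patch system, multiplied by `N = x + y + w`. -/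
def IsEquilibrium (b d c β x y w : ℝ) : Prop :=
  b * birthAA β x y = (d + c * (x + y + w)) * x * (x + y + w) ∧
  b * birthAa β x y w = (d + c * (x + y + w)) * y * (x + y + w) ∧
  b * birthAA β w y = (d + c * (x + y + w)) * w * (x + y + w)

lemma mul_eq_mul_of_div_mul_sub_eq_zero {b N F G : ℝ} (hN : N ≠ 0) (h : b / N * F - G = 0) :
    b * F = G * N := by
  field_simp at h
  linarith

namespace IsEquilibrium

variable {b d c β x y w : ℝ}

lemma symm (h : IsEquilibrium b d c β x y w) : IsEquilibrium b d c β w y x := by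
  obtain ⟨h₁, h₂, h₃⟩ := h
  refine ⟨?_, ?_, ?_⟩ <;> unfold birthAA birthAa at *
  · linear_combination h₃
  · linear_combination h₂
  · linear_combination h₁

lemma mul_birthAA_eq_mul_birthAa (h : IsEquilibrium b d c β x y w) (hb : b ≠ 0) :
    y * birthAA β x y = x * birthAa β x y w := by
  have : b * (y * birthAA β x y - x * birthAa β x y w) = 0 := by
    linear_combination y * h.1 - x * h.2.1
  linear_combination (mul_eq_zero.mp this).resolve_left hb

lemma eq_or_mul_eq_sq_div_four (h : IsEquilibrium b d c β x y w) (hb : b ≠ 0) (hβ : β ≠ 0) :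
    x = w ∨ x * w = y ^ 2 / 4 := by
  have : (b * β) * ((x - w) * (x * w - y ^ 2 / 4)) = 0 := by
    obtain ⟨hAA, -, haa⟩ := h
    unfold birthAA at hAA haa
    linear_combination w * hAA - x * haa
  rcases mul_eq_zero.mp ((mul_eq_zero.mp this).resolve_left (mul_ne_zero hb hβ)) with h' | h'
  · exact .inl (sub_eq_zero.mp h')
  · exact .inr (sub_eq_zero.mp h')

lemma mul_ne_sq_div_four (h : IsEquilibrium b d c β x y w) (hb : b ≠ 0) (hβ : 1 < β)
    (hy : 0 < y) : x * w ≠ y ^ 2 / 4 := by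
  intro hHW
  have hrel := h.mul_birthAA_eq_mul_birthAa hb
  unfold birthAA birthAa at hrel
  have hzero : (β - 1) / 2 * (x * y * (x + w)) = 0 := by
    linear_combination hrel + (β * y + 2 * x) * hHW
  have hpos : 0 < x * (x + w) := by
    have : 0 < x * w := by rw [hHW]; positivity
    nlinarith [mul_self_nonneg x]
  have : 0 < (β - 1) / 2 * (x * y * (x + w)) := by
    rw [mul_right_comm x y]; exact mul_pos (by linarith) (mul_pos hpos hy)
  linarith

lemma mul_eq_zero_of_y_eq_zero (h : IsEquilibrium b d c β x 0 w) (hb : b ≠ 0) : x * w = 0 := by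
  have : b * (2 * (x * w)) = 0 := by
    obtain ⟨-, hAa, -⟩ := h
    unfold birthAa at hAa
    linear_combination hAa
  simpa using (mul_eq_zero.mp this).resolve_left hb

lemma eq_of_y_eq_zero_of_w_eq_zero (h : IsEquilibrium b d c β x 0 0) (hc : c ≠ 0)
    (hx : x ≠ 0) : x = (b * β - d) / c := by
  have : (b * β - d - c * x) * x ^ 2 = 0 := by
    obtain ⟨hAA, -, -⟩ := h
    unfold birthAA at hAA
    linear_combination hAA
  rw [eq_div_iff hc]
  linarith [(mul_eq_zero.mp this).resolve_right (pow_ne_zero 2 hx)]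

lemma cubic_of_w_eq_x (h : IsEquilibrium b d c β x y x) (hb : b ≠ 0) :
    x ^ 3 + (1 / 2) * x ^ 2 * y - (1 / 4) * x * y ^ 2 - (β / 8) * y ^ 3 = 0 := by
  have hrel := h.mul_birthAA_eq_mul_birthAa hb
  unfold birthAA birthAa at hrel
  linear_combination (-1 / 2) * hrel

/-- For `w = x` the heterozygote birth term factors as `(x + y + x) (x + (β / 2) y)`. -/
lemma birthAa_eq_of_w_eq_x (h : IsEquilibrium b d c β x y x) (hx : 0 ≤ x) (hy : 0 < y) :
    b * (x + (β / 2) * y) = (d + c * (x + y + x)) * y := by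
  refine mul_right_cancel₀ (by positivity : x + y + x ≠ 0) ?_
  obtain ⟨-, hAa, -⟩ := h
  unfold birthAa at hAa
  linear_combination hAa

lemma exists_root_of_w_eq_x (h : IsEquilibrium b d c β x y x) (hb : b ≠ 0) (hc : 0 < c)
    (hβ : 0 < β) (hx : 0 ≤ x) (hy : 0 < y) :
    ∃ δ : ℝ, 0 < δ ∧ δ ^ 3 + (1 / 2) * δ ^ 2 - (1 / 4) * δ - β / 8 = 0 ∧
      x = δ * ((b * (δ + β / 2) - d) / ((2 * δ + 1) * c)) ∧
      y = (b * (δ + β / 2) - d) / ((2 * δ + 1) * c) := by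
  have hcubic := h.cubic_of_w_eq_x hb
  have hx : 0 < x := by
    refine hx.lt_of_ne fun hx0 => ?_
    subst hx0
    have : 0 < (β / 8) * y ^ 3 := by positivity
    linarith
  have hy0 : y ≠ 0 := hy.ne'
  have hyval : y = (b * (x / y + β / 2) - d) / ((2 * (x / y) + 1) * c) := by
    rw [eq_div_iff (by positivity)]
    field_simp
    linear_combination (-2) * h.birthAa_eq_of_w_eq_x hx.le hy
  refine ⟨x / y, by positivity, ?_, ?_, hyval⟩
  · field_simp
    linear_combination 64 * hcubic
  · rw [← hyval, div_mul_cancel₀ x hy0]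

end IsEquilibrium

theorem cod1_one_patch_fixed_points_general (b d c β : ℝ) (hdb : d < b) (hd : 0 < d) (hc : 0 < c)
    (hβ : 1 < β) (x y w : ℝ) (hx : 0 ≤ x) (hy : 0 ≤ y) (hN : 0 < x + y + w)
    (heq1 : b / (x + y + w) * (β * x ^ 2 + ((β + 1) / 2) * x * y + (β / 4) * y ^ 2)
      - (d + c * (x + y + w)) * x = 0)
    (heq2 : b / (x + y + w) * ((β / 2) * y ^ 2 + ((β + 1) / 2) * y * (x + w) + 2 * x * w)
      - (d + c * (x + y + w)) * y = 0)
    (heq3 : b / (x + y + w) * (β * w ^ 2 + ((β + 1) / 2) * w * y + (β / 4) * y ^ 2)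
      - (d + c * (x + y + w)) * w = 0) :
    (x = (b * β - d) / c ∧ y = 0 ∧ w = 0) ∨
    (x = 0 ∧ y = 0 ∧ w = (b * β - d) / c) ∨
    (∃ δ : ℝ, 0 < δ ∧ δ ^ 3 + (1 / 2) * δ ^ 2 - (1 / 4) * δ - β / 8 = 0 ∧
      x = δ * ((b * (δ + β / 2) - d) / ((2 * δ + 1) * c)) ∧
      y = (b * (δ + β / 2) - d) / ((2 * δ + 1) * c) ∧
      w = δ * ((b * (δ + β / 2) - d) / ((2 * δ + 1) * c))) := by
  have hb : b ≠ 0 := (hd.trans hdb).ne'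
  have h : IsEquilibrium b d c β x y w :=
    ⟨mul_eq_mul_of_div_mul_sub_eq_zero hN.ne' heq1, mul_eq_mul_of_div_mul_sub_eq_zero hN.ne' heq2,
      mul_eq_mul_of_div_mul_sub_eq_zero hN.ne' heq3⟩
  rcases hy.eq_or_lt with rfl | hy
  · rcases mul_eq_zero.mp (h.mul_eq_zero_of_y_eq_zero hb) with rfl | rfl
    · exact .inr (.inl ⟨rfl, rfl, h.symm.eq_of_y_eq_zero_of_w_eq_zero hc.ne' (by linarith)⟩)
    · exact .inl ⟨h.eq_of_y_eq_zero_of_w_eq_zero hc.ne' (by linarith), rfl, rfl⟩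
  · obtain rfl : x = w := (h.eq_or_mul_eq_sq_div_four hb (by positivity)).resolve_right
      (h.mul_ne_sq_div_four hb hβ hy)
    obtain ⟨δ, hδ, hP, hxδ, hyδ⟩ := h.exists_root_of_w_eq_x hb hc (by positivity) hx hy
    exact .inr (.inr ⟨δ, hδ, hP, hxδ, hyδ, hxδ⟩)

/-- Every fixed point (x, y, w) of the one-patch COD1 system with
nonnegative coordinates and N = x + y + w > 0 is one of (ζ, 0, 0), (0, 0, ζ),
or (δξ, ξ, δξ), where δ is the unique positive root of
P(X) = X³ + (1/2)X² − (1/4)X − β/8 and ξ = (b(δ + β/2) − d)/((2δ + 1)c). -/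
theorem cod1_one_patch_fixed_points (b d c β : ℝ) (hdb : d < b) (hd : 0 < d) (hc : 0 < c)
    (hβ : 1 < β) (x y w : ℝ) (hx : 0 ≤ x) (hy : 0 ≤ y) (hw : 0 ≤ w) (hN : 0 < x + y + w)
    (heq1 : b / (x + y + w) * (β * x ^ 2 + ((β + 1) / 2) * x * y + (β / 4) * y ^ 2)
      - (d + c * (x + y + w)) * x = 0)
    (heq2 : b / (x + y + w) * ((β / 2) * y ^ 2 + ((β + 1) / 2) * y * (x + w) + 2 * x * w)
      - (d + c * (x + y + w)) * y = 0)
    (heq3 : b / (x + y + w) * (β * w ^ 2 + ((β + 1) / 2) * w * y + (β / 4) * y ^ 2)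
      - (d + c * (x + y + w)) * w = 0) :
    (x = (b * β - d) / c ∧ y = 0 ∧ w = 0) ∨
    (x = 0 ∧ y = 0 ∧ w = (b * β - d) / c) ∨
    (∃ δ : ℝ, 0 < δ ∧ δ ^ 3 + (1 / 2) * δ ^ 2 - (1 / 4) * δ - β / 8 = 0 ∧
      x = δ * ((b * (δ + β / 2) - d) / ((2 * δ + 1) * c)) ∧
      y = (b * (δ + β / 2) - d) / ((2 * δ + 1) * c) ∧
      w = δ * ((b * (δ + β / 2) - d) / ((2 * δ + 1) * c))) :=
  cod1_one_patch_fixed_points_general b d c β hdb hd hc hβ x y w hx hy hN heq1 heq2 heq3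
end

section
/- Let z = (x, y, w) : [0, ∞) → (0, ∞)³ be a global solution of the one-patch COD1 system. If x(0) > w(0), then z(t) converges to (ζ, 0, 0) as t → ∞. -/
/-
The ratios `ρ = y / x` and `r = w / x` solve a closed planar system in which `d` and `c` do not
appear. Along it `1 - r` solves a linear equation, so `w < x` persists; `ρ` is driven below `6`;
then `σ = ρ² / r` is driven below `4 - ε`, which makes `r' ≤ -κ r` once `r` is trapped below a
level `< 1`. Hence `r → 0` and `ρ ≤ 2 √r → 0`. The total population `N = x + y + w` then
satisfies the logistic equation `N' = N (c (ζ - N) - e)` with a perturbation `e → 0` built from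
`ρ` and `r`, so `N → ζ`, and finally `x = N / (1 + ρ + r) → ζ`.
-/

open Filter Set Topology

section Comparison

variable {v v' : ℝ → ℝ} {a c κ : ℝ}

theorem lt_of_hasDerivAt_neg_of_eq (hv : ∀ t, a ≤ t → HasDerivAt v (v' t) t)
    (hneg : ∀ t, a ≤ t → v t = c → v' t < 0) (ha : v a < c) {t : ℝ} (ht : a ≤ t) :
    v t < c := by
  have hle : ∀ s, a ≤ s → v s ≤ c := fun s hs =>
    image_le_of_deriv_right_lt_deriv_boundary (B := fun _ => c) (B' := 0)
      (fun r hr => (hv r hr.1).continuousAt.continuousWithinAt)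
      (fun r hr => (hv r hr.1).hasDerivWithinAt) ha.le (fun _ => hasDerivAt_const _ _)
      (fun r hr => hneg r hr.1) ⟨hs, le_rfl⟩
  rcases ht.eq_or_lt with rfl | hat
  · exact ha
  refine (hle t ht).lt_of_ne fun hvt => (hneg t ht hvt).ne ?_
  have hmax : IsLocalMax v t :=
    mem_of_superset (Ioi_mem_nhds hat) fun s hs => hvt ▸ hle s (le_of_lt hs)
  exact hmax.hasDerivAt_eq_zero (hv t ht)

theorem eventually_lt_of_hasDerivAt_le_neg (hκ : 0 < κ)
    (hv : ∀ᶠ t in atTop, HasDerivAt v (v' t) t)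
    (hdec : ∀ᶠ t in atTop, c ≤ v t → v' t ≤ -κ) : ∀ᶠ t in atTop, v t < c := by
  obtain ⟨a, ha⟩ := eventually_atTop.1 (hv.and hdec)
  obtain ⟨t₁, hat₁, hvt₁⟩ : ∃ t₁, a ≤ t₁ ∧ v t₁ < c := by
    by_contra! hge
    -- otherwise `v` would decrease at rate `κ` forever
    have hlin : ∀ t, a ≤ t → v t ≤ v a - κ * (t - a) := fun t ht =>
      image_le_of_deriv_right_le_deriv_boundary (B := fun s => v a - κ * (s - a))
        (B' := fun _ => -κ) (fun s hs => (ha s hs.1).1.continuousAt.continuousWithinAt)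
        (fun s hs => (ha s hs.1).1.hasDerivWithinAt) (by simp) (by fun_prop)
        (fun s _ => by
          simpa using (((hasDerivAt_id s).sub_const a).const_mul κ).const_sub (v a)
            |>.hasDerivWithinAt)
        (fun s hs => (ha s hs.1).2 (hge s hs.1)) ⟨ht, le_rfl⟩
    have hT : a ≤ a + (v a - c) / κ + 1 := by
      have := div_nonneg (sub_nonneg.2 (hge a le_rfl)) hκ.le
      linarith
    have hcancel : κ * (a + (v a - c) / κ + 1 - a) = v a - c + κ := by field_simp; ring
    linarith [hlin _ hT, hge _ hT]
  exact eventually_atTop.2 ⟨t₁, fun t ht =>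
    lt_of_hasDerivAt_neg_of_eq (fun s hs => (ha s (hat₁.trans hs)).1)
      (fun s hs hvs => ((ha s (hat₁.trans hs)).2 hvs.ge).trans_lt (neg_neg_of_pos hκ)) hvt₁ ht⟩

theorem eventually_gt_of_hasDerivAt_ge (hκ : 0 < κ)
    (hv : ∀ᶠ t in atTop, HasDerivAt v (v' t) t)
    (hinc : ∀ᶠ t in atTop, v t ≤ c → κ ≤ v' t) : ∀ᶠ t in atTop, c < v t := by
  have := eventually_lt_of_hasDerivAt_le_neg (v := -v) (v' := -v') (c := -c) hκ
    (hv.mono fun _ h => h.neg) (hinc.mono fun _ h hc => neg_le_neg (h (neg_le_neg_iff.1 hc)))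
  exact this.mono fun _ h => neg_lt_neg_iff.1 h

theorem tendsto_zero_of_hasDerivAt_le_neg_mul (hκ : 0 < κ)
    (hv : ∀ᶠ t in atTop, HasDerivAt v (v' t) t) (hdec : ∀ᶠ t in atTop, v' t ≤ -κ * v t)
    (hnonneg : ∀ᶠ t in atTop, 0 ≤ v t) : Tendsto v atTop (𝓝 0) :=
  tendsto_order.2 ⟨fun _ hl => hnonneg.mono fun _ h => hl.trans_le h,
    fun u hu => eventually_lt_of_hasDerivAt_le_neg (mul_pos hκ hu) hv
      (hdec.mono fun _ h hut => h.trans (by nlinarith))⟩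

theorem pos_of_hasDerivAt_eq_mul {u g : ℝ → ℝ} (hg : ContinuousOn g (Ici a))
    (hu : ∀ t, a ≤ t → HasDerivAt u (g t * u t) t) (ha : 0 < u a) {t : ℝ} (ht : a ≤ t) :
    0 < u t := by
  by_contra! hut
  obtain ⟨t₀, ht₀, hut₀⟩ : ∃ t₀ ∈ Icc a t, u t₀ = 0 :=
    intermediate_value_Icc' ht (fun s hs => (hu s hs.1).continuousAt.continuousWithinAt)
      ⟨hut, ha.le⟩
  obtain ⟨K, hK⟩ := isCompact_Icc.exists_bound_of_continuousOn
    (hg.mono (Icc_subset_Ici_self : Icc a t₀ ⊆ _))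
  -- Grönwall backwards in time from the zero `t₀` forces `u a = 0`
  have hgron := norm_le_gronwallBound_of_norm_deriv_right_le (f := fun s => u (t₀ - s))
    (f' := fun s => -(g (t₀ - s) * u (t₀ - s))) (δ := 0) (K := K) (ε := 0) (a := 0) (b := t₀ - a)
    (fun s hs => ((hu (t₀ - s) (by linarith [hs.2])).continuousAt.comp
      (continuousAt_const.sub continuousAt_id)).continuousWithinAt)
    (fun s hs => by
      have := (hu (t₀ - s) (by linarith [hs.2])).comp s ((hasDerivAt_id s).const_sub t₀)
      rw [mul_neg_one] at this
      exact this.hasDerivWithinAt)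
    (by simp [hut₀])
    (fun s hs => by
      rw [norm_neg, norm_mul, add_zero]
      exact mul_le_mul_of_nonneg_right (hK _ ⟨by linarith [hs.2], by linarith [hs.1]⟩)
        (norm_nonneg _))
    (t₀ - a) ⟨by linarith [ht₀.1], le_rfl⟩
  rw [gronwallBound_ε0_δ0, sub_sub_cancel, norm_le_zero_iff] at hgron
  exact ha.ne' hgron

end Comparison

theorem tendsto_of_hasDerivAt_logistic {N e : ℝ → ℝ} {c ζ : ℝ} (hc : 0 < c) (hζ : 0 < ζ)
    (hpos : ∀ᶠ t in atTop, 0 < N t)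
    (hN : ∀ᶠ t in atTop, HasDerivAt N (N t * (c * (ζ - N t) - e t)) t)
    (he : Tendsto e atTop (𝓝 0)) : Tendsto N atTop (𝓝 ζ) := by
  have hlog : ∀ᶠ t in atTop, HasDerivAt (fun s => Real.log (N s)) (c * (ζ - N t) - e t) t :=
    (hpos.and hN).mono fun t ⟨hNt, hd⟩ => by
      simpa [hNt.ne'] using hd.log hNt.ne'
  have hlim : Tendsto (fun t => Real.log (N t)) atTop (𝓝 (Real.log ζ)) := by
    refine tendsto_order.2 ⟨fun l hl => ?_, fun u hu => ?_⟩
    · have hgap : 0 < c * (ζ - Real.exp l) := mul_pos hc (sub_pos.2 (by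
        simpa [Real.exp_log hζ] using Real.exp_lt_exp.2 hl))
      refine eventually_gt_of_hasDerivAt_ge (half_pos hgap) hlog ?_
      filter_upwards [hpos, (tendsto_order.1 he).2 _ (half_pos hgap)] with t hNt het hlt
      have : N t ≤ Real.exp l := by simpa [Real.exp_log hNt] using Real.exp_le_exp.2 hlt
      nlinarith
    · have hgap : 0 < c * (Real.exp u - ζ) := mul_pos hc (sub_pos.2 (by
        simpa [Real.exp_log hζ] using Real.exp_lt_exp.2 hu))
      refine eventually_lt_of_hasDerivAt_le_neg (half_pos hgap) hlog ?_
      filter_upwards [hpos, (tendsto_order.1 he).1 _ (neg_lt_zero.2 (half_pos hgap))]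
        with t hNt het hge
      have : Real.exp u ≤ N t := by simpa [Real.exp_log hNt] using Real.exp_le_exp.2 hge
      nlinarith
  have := (Real.continuous_exp.tendsto _).comp hlim
  rw [Function.comp_def, Real.exp_log hζ] at this
  exact this.congr' (hpos.mono fun t hNt => Real.exp_log hNt)

theorem tendsto_prod_of_tendsto_add_of_tendsto_div {x y w : ℝ → ℝ} {ζ : ℝ}
    (hpos : ∀ᶠ t in atTop, 0 < x t ∧ 0 < y t ∧ 0 < w t)
    (hN : Tendsto (fun t => x t + y t + w t) atTop (𝓝 ζ))
    (hρ : Tendsto (fun t => y t / x t) atTop (𝓝 0))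
    (hr : Tendsto (fun t => w t / x t) atTop (𝓝 0)) :
    Tendsto (fun t => (x t, y t, w t)) atTop (𝓝 (ζ, 0, 0)) := by
  have hxlim : Tendsto x atTop (𝓝 ζ) := by
    have h := hN.div ((tendsto_const_nhds (x := (1 : ℝ))).add hρ |>.add hr) (by norm_num)
    rw [add_zero, add_zero, div_one] at h
    refine h.congr' (hpos.mono fun t ⟨hxt, hyt, hwt⟩ => ?_)
    have : x t + y t + w t ≠ 0 := by positivity
    simp only [Pi.div_apply]
    field_simp
  have hmul {v : ℝ → ℝ} (hv : Tendsto (fun t => v t / x t) atTop (𝓝 0)) :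
      Tendsto v atTop (𝓝 0) := by
    have h := hv.mul hxlim
    rw [zero_mul] at h
    exact h.congr' (hpos.mono fun t ht => by field_simp [ht.1.ne'])
  exact hxlim.prodMk_nhds ((hmul hρ).prodMk_nhds (hmul hr))

theorem HasDerivAt.sq_div {f g : ℝ → ℝ} {f' g' t : ℝ} (hf : HasDerivAt f f' t)
    (hg : HasDerivAt g g' t) (hft : f t ≠ 0) (hgt : g t ≠ 0) :
    HasDerivAt (fun s => f s ^ 2 / g s) (f t ^ 2 / g t * (2 * f' / f t - g' / g t)) t := by
  refine ((hf.pow 2).div hg hgt).congr_deriv ?_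
  rw [Pi.pow_apply]
  field_simp
  ring

namespace COD1

/-- Along a solution, `(y / x)' = b * ratioFieldY β (y / x) (w / x)` and
`(w / x)' = b * ratioFieldW β (y / x) (w / x)`. -/
noncomputable def ratioFieldY (β ρ r : ℝ) : ℝ :=
  (2 * r + (β + 1) / 2 * ρ * r - (β - 1) / 2 * ρ - ρ ^ 2 / 2 - β / 4 * ρ ^ 3) / (1 + ρ + r)

noncomputable def ratioFieldW (β ρ r : ℝ) : ℝ := β / 4 * (1 - r) * (ρ ^ 2 - 4 * r) / (1 + ρ + r)

theorem ratioFieldY_le_neg_one {β ρ r : ℝ} (hβ : 1 < β) (hρ : 6 ≤ ρ) (hr₀ : 0 ≤ r)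
    (hr₁ : r ≤ 1) : ratioFieldY β ρ r ≤ -1 := by
  rw [ratioFieldY, div_le_iff₀ (by positivity)]
  nlinarith [mul_le_mul_of_nonneg_left hr₁ (by positivity : 0 ≤ (β - 1) * ρ),
    mul_nonneg (sub_nonneg.2 hβ.le) (by positivity : 0 ≤ ρ ^ 3)]

theorem ratioFieldW_le {β ε ρ r : ℝ} (hβ : 0 ≤ β) (hε : 0 ≤ ε) (hρ₀ : 0 ≤ ρ) (hρ₆ : ρ ≤ 6)
    (hr₀ : 0 ≤ r) (hr₁ : r ≤ 1) (hρr : ρ ^ 2 ≤ (4 - ε) * r) :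
    ratioFieldW β ρ r ≤ -(β * ε / 32) * (r * (1 - r)) := by
  have hprod : 0 ≤ β * (1 - r) * (ε * r) := by have := sub_nonneg.2 hr₁; positivity
  rw [ratioFieldW, div_le_iff₀ (by positivity)]
  nlinarith [mul_le_mul_of_nonneg_left (sub_nonneg.2 hρr) (by positivity : 0 ≤ β * (1 - r)),
    mul_le_mul_of_nonneg_left (by linarith : 1 + ρ + r ≤ 8) hprod]

/-- `b` times the left-hand side is the logarithmic derivative of `σ = ρ² / r`. The constant
`ε = (β - 1) / (β + 8)` is small enough that `σ ≥ 4 - ε` makes it uniformly negative. -/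
theorem logDeriv_sq_div_le {β ρ r : ℝ} (hβ : 1 < β) (hρ₀ : 0 < ρ) (hρ₆ : ρ ≤ 6) (hr₀ : 0 < r)
    (hr₁ : r ≤ 1) (hσ : 4 - (β - 1) / (β + 8) ≤ ρ ^ 2 / r) :
    2 * ratioFieldY β ρ r / ρ - ratioFieldW β ρ r / r ≤ -(β - 1) / 16 := by
  set ε := (β - 1) / (β + 8)
  set σ := ρ ^ 2 / r
  have hε₀ : 0 ≤ ε := by positivity
  have hε : ε * (β + 8) = β - 1 := div_mul_cancel₀ _ (by positivity)
  have hσ₃ : 3 ≤ σ := le_trans (by nlinarith) hσ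
  have hlogDeriv : 2 * ratioFieldY β ρ r / ρ - ratioFieldW β ρ r / r
      = ((1 + r) * (1 - β * σ / 4) + ρ * (4 - σ) / σ) / (1 + ρ + r) := by
    unfold ratioFieldY ratioFieldW σ
    field_simp
    ring
  have hfirst : (1 + r) * (1 - β * σ / 4) ≤ -(3 / 4) * (β - 1) := by
    have : 1 - β * σ / 4 ≤ -(3 / 4) * (β - 1) := by
      nlinarith [mul_le_mul_of_nonneg_left hσ (by linarith : 0 ≤ β)]
    nlinarith
  have hsecond : ρ * (4 - σ) / σ ≤ 2 * ε := by
    rw [div_le_iff₀ (by positivity)]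
    nlinarith [mul_le_mul_of_nonneg_left (by linarith : 4 - σ ≤ ε) hρ₀.le]
  rw [hlogDeriv, div_le_iff₀ (by positivity)]
  nlinarith

section Ratios

variable {b β : ℝ} {ρ r : ℝ → ℝ}

theorem lt_one_of_hasDerivAt_ratioFieldW
    (hρ : ∀ t, 0 ≤ t → HasDerivAt ρ (b * ratioFieldY β (ρ t) (r t)) t)
    (hr : ∀ t, 0 ≤ t → HasDerivAt r (b * ratioFieldW β (ρ t) (r t)) t)
    (hρ₀ : ∀ t, 0 ≤ t → 0 ≤ ρ t) (hr₀ : ∀ t, 0 ≤ t → 0 ≤ r t) (h0 : r 0 < 1)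
    {t : ℝ} (ht : 0 ≤ t) : r t < 1 := by
  -- `1 - r` solves a linear equation, so it cannot reach `0`
  have hg : ContinuousOn (fun s => -(b * β / 4) * (ρ s ^ 2 - 4 * r s) / (1 + ρ s + r s))
      (Ici 0) := fun s hs => by
      have := (hρ s hs).continuousAt
      have := (hr s hs).continuousAt
      have := hρ₀ s hs
      have := hr₀ s hs
      exact (ContinuousAt.div (by fun_prop) (by fun_prop) (by positivity)).continuousWithinAt
  have := pos_of_hasDerivAt_eq_mul (u := fun s => 1 - r s) hg
    (fun s hs => ((hr s hs).const_sub 1).congr_deriv (by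
      have := hρ₀ s hs
      have := hr₀ s hs
      unfold ratioFieldW
      field_simp)) (by simpa using h0) ht
  simpa using this

theorem eventually_lt_six (hb : 0 < b) (hβ : 1 < β)
    (hρ : ∀ᶠ t in atTop, HasDerivAt ρ (b * ratioFieldY β (ρ t) (r t)) t)
    (hr : ∀ᶠ t in atTop, 0 ≤ r t ∧ r t ≤ 1) : ∀ᶠ t in atTop, ρ t < 6 :=
  eventually_lt_of_hasDerivAt_le_neg hb hρ <| hr.mono fun _ hrt h6 => by
    nlinarith [ratioFieldY_le_neg_one hβ h6 hrt.1 hrt.2]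

theorem eventually_sq_div_lt (hb : 0 < b) (hβ : 1 < β)
    (hρ : ∀ᶠ t in atTop, HasDerivAt ρ (b * ratioFieldY β (ρ t) (r t)) t)
    (hr : ∀ᶠ t in atTop, HasDerivAt r (b * ratioFieldW β (ρ t) (r t)) t)
    (hbounds : ∀ᶠ t in atTop, 0 < ρ t ∧ ρ t ≤ 6 ∧ 0 < r t ∧ r t ≤ 1) :
    ∀ᶠ t in atTop, ρ t ^ 2 / r t < 4 - (β - 1) / (β + 8) := by
  refine eventually_lt_of_hasDerivAt_le_neg (κ := b * (β - 1) / 16) (by nlinarith)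
    (by filter_upwards [hρ, hr, hbounds] with t hρt hrt ht
        exact hρt.sq_div hrt ht.1.ne' ht.2.2.1.ne') ?_
  filter_upwards [hbounds] with t ⟨hρ₀, hρ₆, hr₀, hr₁⟩ hσ
  have hD := logDeriv_sq_div_le hβ hρ₀ hρ₆ hr₀ hr₁ hσ
  have hσ₁ : 1 ≤ ρ t ^ 2 / r t := le_trans (by
    have : (β - 1) / (β + 8) ≤ 1 := (div_le_one (by linarith)).2 (by linarith)
    linarith) hσ
  set D := 2 * ratioFieldY β (ρ t) (r t) / ρ t - ratioFieldW β (ρ t) (r t) / r t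
  calc ρ t ^ 2 / r t * (2 * (b * ratioFieldY β (ρ t) (r t)) / ρ t
          - b * ratioFieldW β (ρ t) (r t) / r t)
      = b * (ρ t ^ 2 / r t * D) := by ring
    _ ≤ b * (-(β - 1) / 16) := mul_le_mul_of_nonneg_left (by nlinarith) hb.le
    _ = -(b * (β - 1) / 16) := by ring

theorem tendsto_ratio_w {ε : ℝ} (hb : 0 < b) (hβ : 1 < β) (hε : 0 < ε)
    (hr : ∀ᶠ t in atTop, HasDerivAt r (b * ratioFieldW β (ρ t) (r t)) t)
    (hbounds : ∀ᶠ t in atTop,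
      0 ≤ ρ t ∧ ρ t ≤ 6 ∧ 0 < r t ∧ r t < 1 ∧ ρ t ^ 2 ≤ (4 - ε) * r t) :
    Tendsto r atTop (𝓝 0) := by
  obtain ⟨a, ha⟩ := eventually_atTop.1 (hr.and hbounds)
  have hκ : 0 < b * β * ε / 32 := by
    have : 0 < β := by linarith
    positivity
  have hdecay : ∀ t, a ≤ t →
      b * ratioFieldW β (ρ t) (r t) ≤ -(b * β * ε / 32) * (r t * (1 - r t)) := fun t ht => by
    obtain ⟨-, hρ₀, hρ₆, hr₀, hr₁, hρr⟩ := ha t ht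
    have := ratioFieldW_le (β := β) (by linarith) hε.le hρ₀ hρ₆ hr₀.le hr₁.le hρr
    nlinarith
  obtain ⟨-, -, -, hra₀, hra₁, -⟩ := ha a le_rfl
  obtain ⟨r₀, hr₀⟩ := exists_between hra₁
  have htrap : ∀ t, a ≤ t → r t < r₀ := fun t ht =>
    lt_of_hasDerivAt_neg_of_eq (fun s hs => (ha s hs).1) (fun s hs hrs => by
      have : 0 < r s * (1 - r s) := by
        rw [hrs]
        exact mul_pos (by linarith) (by linarith)
      nlinarith [hdecay s hs, mul_pos hκ this]) hr₀.1 ht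
  refine tendsto_zero_of_hasDerivAt_le_neg_mul (mul_pos hκ (sub_pos.2 hr₀.2)) hr ?_
    (hbounds.mono fun t ht => ht.2.2.1.le)
  filter_upwards [eventually_ge_atTop a] with t ht
  have : 0 ≤ b * β * ε / 32 * r t := mul_nonneg hκ.le (ha t ht).2.2.2.1.le
  nlinarith [hdecay t ht, htrap t ht]

theorem tendsto_ratio_y (hρ₀ : ∀ᶠ t in atTop, 0 ≤ ρ t) (hρr : ∀ᶠ t in atTop, ρ t ^ 2 ≤ 4 * r t)
    (hr : Tendsto r atTop (𝓝 0)) : Tendsto ρ atTop (𝓝 0) := by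
  have hsqrt : Tendsto (fun t => √(4 * r t)) atTop (𝓝 0) := by
    simpa using (hr.const_mul 4).sqrt
  refine tendsto_of_tendsto_of_tendsto_of_le_of_le' tendsto_const_nhds hsqrt hρ₀ ?_
  filter_upwards [hρ₀, hρr] with t h₀ h using Real.le_sqrt_of_sq_le h

theorem tendsto_ratios (hb : 0 < b) (hβ : 1 < β)
    (hρ : ∀ t, 0 ≤ t → HasDerivAt ρ (b * ratioFieldY β (ρ t) (r t)) t)
    (hr : ∀ t, 0 ≤ t → HasDerivAt r (b * ratioFieldW β (ρ t) (r t)) t)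
    (hρ₀ : ∀ t, 0 ≤ t → 0 < ρ t) (hr₀ : ∀ t, 0 ≤ t → 0 < r t) (h0 : r 0 < 1) :
    Tendsto ρ atTop (𝓝 0) ∧ Tendsto r atTop (𝓝 0) := by
  have ev {P : ℝ → Prop} (h : ∀ t, 0 ≤ t → P t) : ∀ᶠ t in atTop, P t :=
    eventually_atTop.2 ⟨0, h⟩
  have hr₁ : ∀ᶠ t in atTop, r t < 1 :=
    ev fun t => lt_one_of_hasDerivAt_ratioFieldW hρ hr (fun s hs => (hρ₀ s hs).le)
      (fun s hs => (hr₀ s hs).le) h0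
  have hρ₆ := eventually_lt_six hb hβ (ev hρ)
    (by filter_upwards [ev hr₀, hr₁] with t h₀ h₁ using ⟨h₀.le, h₁.le⟩)
  have hσ := eventually_sq_div_lt hb hβ (ev hρ) (ev hr)
    (by filter_upwards [ev hρ₀, hρ₆, ev hr₀, hr₁] with t h₁ h₂ h₃ h₄
        using ⟨h₁, h₂.le, h₃, h₄.le⟩)
  have hρr : ∀ᶠ t in atTop, ρ t ^ 2 ≤ (4 - (β - 1) / (β + 8)) * r t := by
    filter_upwards [hσ, ev hr₀] with t h hrt using ((div_lt_iff₀ hrt).1 h).le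
  have hrlim := tendsto_ratio_w (ε := (β - 1) / (β + 8)) hb hβ
    (div_pos (by linarith) (by linarith)) (ev hr)
    (by filter_upwards [ev hρ₀, hρ₆, ev hr₀, hr₁, hρr] with t h₁ h₂ h₃ h₄ h₅
        using ⟨h₁.le, h₂.le, h₃, h₄, h₅⟩)
  refine ⟨tendsto_ratio_y (ev fun t ht => (hρ₀ t ht).le) ?_ hrlim, hrlim⟩
  filter_upwards [hρr, ev hr₀] with t h hrt
  nlinarith [div_nonneg (by linarith : (0:ℝ) ≤ β - 1) (by linarith : (0:ℝ) ≤ β + 8)]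

end Ratios

/-- `(y (x + w) + 2 x w) / N²`, written in terms of `y / x` and `w / x`. -/
noncomputable def birthDeficit (ρ r : ℝ) : ℝ := (ρ * (1 + r) + 2 * r) / (1 + ρ + r) ^ 2

theorem tendsto_birthDeficit {ρ r : ℝ → ℝ} (hρ : Tendsto ρ atTop (𝓝 0))
    (hr : Tendsto r atTop (𝓝 0)) :
    Tendsto (fun t => birthDeficit (ρ t) (r t)) atTop (𝓝 0) := by
  have := ((hρ.mul ((tendsto_const_nhds (x := (1 : ℝ))).add hr)).add (hr.const_mul 2)).div
    (((tendsto_const_nhds (x := (1 : ℝ))).add hρ).add hr |>.pow 2) (by norm_num)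
  simpa [birthDeficit, Pi.div_def] using this

section Model

noncomputable def fieldX (b d c β X Y W : ℝ) : ℝ :=
  b / (X + Y + W) * (β * X ^ 2 + ((β + 1) / 2) * X * Y + (β / 4) * Y ^ 2)
    - (d + c * (X + Y + W)) * X

noncomputable def fieldY (b d c β X Y W : ℝ) : ℝ :=
  b / (X + Y + W) * ((β / 2) * Y ^ 2 + ((β + 1) / 2) * Y * (X + W) + 2 * X * W)
    - (d + c * (X + Y + W)) * Y

noncomputable def fieldW (b d c β X Y W : ℝ) : ℝ :=
  b / (X + Y + W) * (β * W ^ 2 + ((β + 1) / 2) * W * Y + (β / 4) * Y ^ 2)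
    - (d + c * (X + Y + W)) * W

structure IsSolution (b d c β : ℝ) (x y w : ℝ → ℝ) : Prop where
  pos : ∀ t, 0 ≤ t → 0 < x t ∧ 0 < y t ∧ 0 < w t
  hasDerivAt_x : ∀ t, 0 ≤ t → HasDerivAt x (fieldX b d c β (x t) (y t) (w t)) t
  hasDerivAt_y : ∀ t, 0 ≤ t → HasDerivAt y (fieldY b d c β (x t) (y t) (w t)) t
  hasDerivAt_w : ∀ t, 0 ≤ t → HasDerivAt w (fieldW b d c β (x t) (y t) (w t)) t

variable {b d c β : ℝ}

theorem fieldY_mul_sub_mul_fieldX_div_sq {X Y W : ℝ} (hX : 0 < X) (hY : 0 < Y) (hW : 0 < W) :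
    (fieldY b d c β X Y W * X - Y * fieldX b d c β X Y W) / X ^ 2
      = b * ratioFieldY β (Y / X) (W / X) := by
  unfold fieldX fieldY ratioFieldY
  field_simp
  ring

theorem fieldW_mul_sub_mul_fieldX_div_sq {X Y W : ℝ} (hX : 0 < X) (hY : 0 < Y) (hW : 0 < W) :
    (fieldW b d c β X Y W * X - W * fieldX b d c β X Y W) / X ^ 2
      = b * ratioFieldW β (Y / X) (W / X) := by
  unfold fieldX fieldW ratioFieldW
  field_simp
  ring

theorem fieldX_add_fieldY_add_fieldW {X Y W : ℝ} (hc : c ≠ 0) (hX : 0 < X) (hY : 0 < Y)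
    (hW : 0 < W) :
    fieldX b d c β X Y W + fieldY b d c β X Y W + fieldW b d c β X Y W
      = (X + Y + W) * (c * ((b * β - d) / c - (X + Y + W))
          - b * (β - 1) * birthDeficit (Y / X) (W / X)) := by
  unfold fieldX fieldY fieldW birthDeficit
  field_simp
  ring

namespace IsSolution

variable {x y w : ℝ → ℝ}

theorem tendsto_ratios (h : IsSolution b d c β x y w) (hb : 0 < b) (hβ : 1 < β)
    (h0 : w 0 < x 0) :
    Tendsto (fun t => y t / x t) atTop (𝓝 0) ∧ Tendsto (fun t => w t / x t) atTop (𝓝 0) := by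
  refine COD1.tendsto_ratios hb hβ (fun t ht => ?_) (fun t ht => ?_)
    (fun t ht => div_pos (h.pos t ht).2.1 (h.pos t ht).1)
    (fun t ht => div_pos (h.pos t ht).2.2 (h.pos t ht).1) ((div_lt_one (h.pos 0 le_rfl).1).2 h0)
  all_goals obtain ⟨hxt, hyt, hwt⟩ := h.pos t ht
  · rw [← fieldY_mul_sub_mul_fieldX_div_sq hxt hyt hwt]
    exact (h.hasDerivAt_y t ht).div (h.hasDerivAt_x t ht) hxt.ne'
  · rw [← fieldW_mul_sub_mul_fieldX_div_sq hxt hyt hwt]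
    exact (h.hasDerivAt_w t ht).div (h.hasDerivAt_x t ht) hxt.ne'

theorem tendsto_total (h : IsSolution b d c β x y w) (hc : 0 < c) (hζ : 0 < (b * β - d) / c)
    (hρ : Tendsto (fun t => y t / x t) atTop (𝓝 0))
    (hr : Tendsto (fun t => w t / x t) atTop (𝓝 0)) :
    Tendsto (fun t => x t + y t + w t) atTop (𝓝 ((b * β - d) / c)) := by
  refine tendsto_of_hasDerivAt_logistic
    (e := fun t => b * (β - 1) * birthDeficit (y t / x t) (w t / x t)) hc hζ
    (eventually_atTop.2 ⟨0, fun t ht => by obtain ⟨hxt, hyt, hwt⟩ := h.pos t ht; positivity⟩)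
    (eventually_atTop.2 ⟨0, fun t ht => ?_⟩)
    (by simpa using (tendsto_birthDeficit hρ hr).const_mul (b * (β - 1)))
  obtain ⟨hxt, hyt, hwt⟩ := h.pos t ht
  rw [← fieldX_add_fieldY_add_fieldW hc.ne' hxt hyt hwt]
  exact ((h.hasDerivAt_x t ht).add (h.hasDerivAt_y t ht)).add (h.hasDerivAt_w t ht)

end IsSolution
end Model

end COD1

/-- Let z = (x, y, w) : [0, ∞) → (0, ∞)³ be a global solution of
the one-patch COD1 system. If x(0) > w(0), then z(t) → (ζ, 0, 0) as t → ∞. -/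
theorem cod1_one_patch_convergence_A (b d c β : ℝ) (hdb : d < b) (hd : 0 < d) (hc : 0 < c)
    (hβ : 1 < β) (x y w : ℝ → ℝ)
    (hpos : ∀ t : ℝ, 0 ≤ t → 0 < x t ∧ 0 < y t ∧ 0 < w t)
    (hx : ∀ t : ℝ, 0 ≤ t → HasDerivAt x
      (b / (x t + y t + w t) * (β * (x t) ^ 2 + ((β + 1) / 2) * x t * y t + (β / 4) * (y t) ^ 2)
        - (d + c * (x t + y t + w t)) * x t) t)
    (hy : ∀ t : ℝ, 0 ≤ t → HasDerivAt y
      (b / (x t + y t + w t) * ((β / 2) * (y t) ^ 2 + ((β + 1) / 2) * y t * (x t + w t)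
          + 2 * x t * w t)
        - (d + c * (x t + y t + w t)) * y t) t)
    (hw : ∀ t : ℝ, 0 ≤ t → HasDerivAt w
      (b / (x t + y t + w t) * (β * (w t) ^ 2 + ((β + 1) / 2) * w t * y t + (β / 4) * (y t) ^ 2)
        - (d + c * (x t + y t + w t)) * w t) t)
    (h0 : w 0 < x 0) :
    Tendsto (fun t => (x t, y t, w t)) atTop (nhds (((b * β - d) / c, 0, 0) : ℝ × ℝ × ℝ)) := by
  have sol : COD1.IsSolution b d c β x y w := ⟨hpos, hx, hy, hw⟩
  have hb : 0 < b := hd.trans hdb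
  have hζ : 0 < (b * β - d) / c := div_pos (by nlinarith) hc
  obtain ⟨hρ, hr⟩ := sol.tendsto_ratios hb hβ h0
  exact tendsto_prod_of_tendsto_add_of_tendsto_div
    (eventually_atTop.2 ⟨0, hpos⟩) (sol.tendsto_total hc hζ hρ hr) hρ hr
end

section
/- Let z = (x, y, w) : [0, ∞) → (0, ∞)³ be a global solution of the one-patch COD1 system. If x(0) = w(0), then z(t) converges to (δξ, ξ, δξ) as t → ∞, where δ is the unique positive root of P(X) = X³ + (1/2)X² − (1/4)X − β/8 and ξ = (b(δ + β/2) − d)/((2δ + 1)c). -/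
/-!
The difference `x - w` solves a linear equation `u' = G u` and vanishes at `0`, so `x = w` for
all time (Gronwall). On this invariant set the ratio `r = x / y` solves the autonomous equation
`r' = -2 b P(r) / (2 r + 1)`, whose drift pushes `r` towards the positive root `δ` of `P` at a
rate bounded below away from `δ`. Then `(log y)' = A(r) - c (2 r + 1) y` is affine and decreasing
in `y` and vanishes at `(δ, ξ)`, so `y → ξ`, and finally `x = w = r y → δ ξ`.
-/

open Filter Set Topology Real

theorem exists_le_of_hasDerivAt_le_neg {g G : ℝ → ℝ} {T M η : ℝ} (hη : 0 < η)
    (hg : ∀ t, T ≤ t → HasDerivAt g (G t) t) (hG : ∀ t, T ≤ t → M ≤ g t → G t ≤ -η) :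
    ∃ t₀, T ≤ t₀ ∧ g t₀ ≤ M := by
  by_contra! hgM
  set t₁ := T + (g T - M) / η + 1
  have hTt₁ : T < t₁ := by have := div_pos (sub_pos.2 (hgM T le_rfl)) hη; linarith
  obtain ⟨s, hs, hslope⟩ := exists_hasDerivAt_eq_slope g G hTt₁
    (fun t ht => (hg t ht.1).continuousAt.continuousWithinAt) (fun t ht => hg t ht.1.le)
  have hGs : (g t₁ - g T) / (t₁ - T) ≤ -η := hslope ▸ hG s hs.1.le (hgM s hs.1.le).le
  rw [div_le_iff₀ (sub_pos.2 hTt₁)] at hGs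
  have : η * (t₁ - T) = g T - M + η := by simp only [t₁]; field_simp; ring
  linarith [hgM t₁ hTt₁.le]

theorem le_of_hasDerivAt_neg_of_eq {g G : ℝ → ℝ} {T M : ℝ}
    (hg : ∀ t, T ≤ t → HasDerivAt g (G t) t) (hG : ∀ t, T ≤ t → g t = M → G t < 0)
    (hT : g T ≤ M) : ∀ t, T ≤ t → g t ≤ M := fun _ ht =>
  image_le_of_deriv_right_lt_deriv_boundary' (B := fun _ => M) (B' := 0)
    (fun s hs => (hg s hs.1).continuousAt.continuousWithinAt)
    (fun s hs => (hg s hs.1).hasDerivWithinAt) hT continuousOn_const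
    (fun _ _ => hasDerivWithinAt_const _ _ _) (fun s hs => hG s hs.1) ⟨ht, le_rfl⟩

theorem eventually_le_of_hasDerivAt_le_neg {g G : ℝ → ℝ} {M η : ℝ} (hη : 0 < η)
    (hg : ∀ᶠ t in atTop, HasDerivAt g (G t) t) (hG : ∀ᶠ t in atTop, M ≤ g t → G t ≤ -η) :
    ∀ᶠ t in atTop, g t ≤ M := by
  obtain ⟨T, hT⟩ := eventually_atTop.1 (hg.and hG)
  obtain ⟨t₀, hTt₀, hgt₀⟩ := exists_le_of_hasDerivAt_le_neg hη
    (fun t ht => (hT t ht).1) (fun t ht => (hT t ht).2)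
  refine eventually_atTop.2 ⟨t₀, le_of_hasDerivAt_neg_of_eq (fun t ht => (hT t (hTt₀.trans ht)).1)
    (fun t ht hgt => ?_) hgt₀⟩
  linarith [(hT t (hTt₀.trans ht)).2 hgt.ge]

theorem tendsto_of_hasDerivAt_of_attracting {g G : ℝ → ℝ} {L : ℝ}
    (hg : ∀ᶠ t in atTop, HasDerivAt g (G t) t)
    (hlo : ∀ l < L, ∃ η > 0, ∀ᶠ t in atTop, g t ≤ l → η ≤ G t)
    (hup : ∀ u > L, ∃ η > 0, ∀ᶠ t in atTop, u ≤ g t → G t ≤ -η) :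
    Tendsto g atTop (𝓝 L) := by
  refine tendsto_order.2 ⟨fun l hl => ?_, fun u hu => ?_⟩
  · obtain ⟨η, hη, hG⟩ := hlo ((l + L) / 2) (by linarith)
    have := eventually_le_of_hasDerivAt_le_neg (g := fun t => -g t) (G := fun t => -G t)
      (M := -((l + L) / 2)) hη (hg.mono fun t ht => ht.neg)
      (hG.mono fun t ht hgt => by linarith [ht (by linarith)])
    exact this.mono fun t ht => by linarith
  · obtain ⟨η, hη, hG⟩ := hup ((u + L) / 2) (by linarith)
    exact (eventually_le_of_hasDerivAt_le_neg hη hg hG).mono fun t ht => by linarith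

theorem eq_zero_of_hasDerivAt_mul_self {u G : ℝ → ℝ} {a : ℝ}
    (hG : ∀ t, a ≤ t → ContinuousAt G t) (hu : ∀ t, a ≤ t → HasDerivAt u (G t * u t) t)
    (ha : u a = 0) : ∀ t, a ≤ t → u t = 0 := by
  intro T hT
  obtain ⟨C, hC⟩ := isCompact_Icc.exists_bound_of_continuousOn
    fun s (hs : s ∈ Icc a T) => (hG s hs.1).continuousWithinAt
  have := norm_le_gronwallBound_of_norm_deriv_right_le (δ := 0) (K := C) (ε := 0)
    (fun s hs => (hu s hs.1).continuousAt.continuousWithinAt)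
    (fun s hs => (hu s hs.1).hasDerivWithinAt) (by simp [ha])
    (fun s hs => by
      rw [norm_mul, add_zero]
      exact mul_le_mul_of_nonneg_right (hC s ⟨hs.1, hs.2.le⟩) (norm_nonneg _))
    T (right_mem_Icc.2 hT)
  simpa [gronwallBound_ε0] using this

namespace COD1

noncomputable def cubic (β s : ℝ) : ℝ := s ^ 3 + (1 / 2) * s ^ 2 - (1 / 4) * s - β / 8

noncomputable def ratioField (b β s : ℝ) : ℝ := -2 * b * cubic β s / (2 * s + 1)

noncomputable def growthRate (b d c β s v : ℝ) : ℝ :=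
  b * (β / 2 + (β + 1) * s + 2 * s ^ 2) / (2 * s + 1) - (d + c * (2 * s + 1) * v)

variable {b d c β δ : ℝ}

theorem exists_cubic_eq_zero (hβ : 1 < β) : ∃ δ, 1 / 2 ≤ δ ∧ cubic β δ = 0 := by
  have hcont : ContinuousOn (cubic β) (Icc (1 / 2) β) := by unfold cubic; fun_prop
  obtain ⟨δ, hδ, hδ0⟩ := intermediate_value_Icc (by linarith) hcont
    (show (0 : ℝ) ∈ Icc (cubic β (1 / 2)) (cubic β β) by
      constructor <;> simp only [cubic] <;> nlinarith)
  exact ⟨δ, hδ.1, hδ0⟩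

theorem cubic_eq_mul {s : ℝ} (hδ : cubic β δ = 0) :
    cubic β s = (s - δ) * (s ^ 2 + s * δ + δ ^ 2 + (s + δ) / 2 - 1 / 4) := by
  unfold cubic at *; linear_combination hδ

theorem ratioField_le {s : ℝ} (hb : 0 < b) (hδ : cubic β δ = 0) (hδ' : 1 / 2 ≤ δ)
    (hs : δ ≤ s) : ratioField b β s ≤ -(b * (s - δ) / 2) := by
  -- `4 Q - (2 s + 1)`, with `Q` the cofactor in `cubic_eq_mul`
  have hQ : 0 ≤ 4 * s ^ 2 + 4 * s * δ + 4 * δ ^ 2 + 2 * δ - 2 := by nlinarith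
  rw [ratioField, cubic_eq_mul hδ, div_le_iff₀ (by linarith)]
  nlinarith [mul_nonneg (mul_nonneg hb.le (sub_nonneg.2 hs)) hQ]

theorem le_ratioField {s : ℝ} (hb : 0 < b) (hδ : cubic β δ = 0) (hδ' : 1 / 2 ≤ δ) (hs₀ : 0 ≤ s)
    (hs : s ≤ δ) : b * (δ - s) / 2 ≤ ratioField b β s := by
  have hQ : 0 ≤ 4 * s ^ 2 + 4 * s * δ + 4 * δ ^ 2 + 2 * δ - 2 := by nlinarith
  rw [ratioField, cubic_eq_mul hδ, le_div_iff₀ (by linarith)]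
  nlinarith [mul_nonneg (mul_nonneg hb.le (sub_nonneg.2 hs)) hQ]

theorem tendsto_of_hasDerivAt_ratioField {r : ℝ → ℝ} (hb : 0 < b) (hδ : cubic β δ = 0)
    (hδ' : 1 / 2 ≤ δ) (hr : ∀ᶠ t in atTop, 0 ≤ r t ∧ HasDerivAt r (ratioField b β (r t)) t) :
    Tendsto r atTop (𝓝 δ) := by
  refine tendsto_of_hasDerivAt_of_attracting (hr.mono fun t ht => ht.2) (fun l hl => ?_)
    (fun u hu => ?_)
  · have := sub_pos.2 hl
    refine ⟨b * (δ - l) / 2, by positivity, hr.mono fun t ht hrl => ?_⟩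
    calc b * (δ - l) / 2 ≤ b * (δ - r t) / 2 := by gcongr
      _ ≤ ratioField b β (r t) := le_ratioField hb hδ hδ' ht.1 (hrl.trans hl.le)
  · have := sub_pos.2 hu
    refine ⟨b * (u - δ) / 2, by positivity, hr.mono fun t ht hur => ?_⟩
    calc ratioField b β (r t) ≤ -(b * (r t - δ) / 2) := ratioField_le hb hδ hδ' (hu.le.trans hur)
      _ ≤ -(b * (u - δ) / 2) := by gcongr

theorem growthRate_eq_sub (s v ξ : ℝ) :
    growthRate b d c β s v = growthRate b d c β s ξ - c * (2 * s + 1) * (v - ξ) := by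
  unfold growthRate; ring

theorem growthRate_eq_zero (hc : c ≠ 0) (hδ : 2 * δ + 1 ≠ 0) :
    growthRate b d c β δ ((b * (δ + β / 2) - d) / ((2 * δ + 1) * c)) = 0 := by
  unfold growthRate; field_simp; ring

/-- Since `y' = y * growthRate`, the restoring drift of `y` degenerates as `y → 0`; the one of
`log y` does not. -/
theorem tendsto_of_hasDerivAt_log_growthRate {r y : ℝ → ℝ} {ξ : ℝ} (hc : 0 < c) (hξ : 0 < ξ)
    (hδ : 2 * δ + 1 ≠ 0) (hδξ : growthRate b d c β δ ξ = 0) (hr : Tendsto r atTop (𝓝 δ))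
    (hy : ∀ᶠ t in atTop, 0 ≤ r t ∧ 0 < y t ∧
      HasDerivAt (fun t => log (y t)) (growthRate b d c β (r t) (y t)) t) :
    Tendsto y atTop (𝓝 ξ) := by
  have hB : Tendsto (fun t => growthRate b d c β (r t) ξ) atTop (𝓝 0) := by
    have hcont : ContinuousAt (fun s => growthRate b d c β s ξ) δ := by
      unfold growthRate
      fun_prop (disch := exact hδ)
    exact hδξ ▸ hcont.tendsto.comp hr
  have hlog : Tendsto (fun t => log (y t)) atTop (𝓝 (log ξ)) := by
    refine tendsto_of_hasDerivAt_of_attracting (hy.mono fun t ht => ht.2.2) (fun l hl => ?_)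
      (fun u hu => ?_)
    · have hl' := (lt_log_iff_exp_lt hξ).1 hl
      have hη : 0 < c * (ξ - exp l) / 2 := by have := sub_pos.2 hl'; positivity
      refine ⟨_, hη, ((hB.eventually (Ioi_mem_nhds (neg_lt_zero.2 hη))).and hy).mono
        fun t ⟨hBt, hr₀, hy₀, _⟩ hyl => ?_⟩
      have hyl' := (log_le_iff_le_exp hy₀).1 hyl
      rw [growthRate_eq_sub _ _ ξ]
      nlinarith [mul_nonneg (mul_nonneg hc.le hr₀) (sub_nonneg.2 (hyl'.trans hl'.le)), hBt]
    · have hu' := (log_lt_iff_lt_exp hξ).1 hu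
      have hη : 0 < c * (exp u - ξ) / 2 := by have := sub_pos.2 hu'; positivity
      refine ⟨_, hη, ((hB.eventually (Iio_mem_nhds hη)).and hy).mono
        fun t ⟨hBt, hr₀, hy₀, _⟩ huy => ?_⟩
      have huy' := (le_log_iff_exp_le hy₀).1 huy
      rw [growthRate_eq_sub _ _ ξ]
      nlinarith [mul_nonneg (mul_nonneg hc.le hr₀) (sub_nonneg.2 (hu'.le.trans huy')), hBt]
  have hexp := (continuous_exp.tendsto _).comp hlog
  rw [exp_log hξ] at hexp
  exact hexp.congr' (hy.mono fun t ht => exp_log ht.2.1)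

structure IsSolution_s4 (b d c β : ℝ) (x y w : ℝ → ℝ) : Prop where
  pos : ∀ t : ℝ, 0 ≤ t → 0 < x t ∧ 0 < y t ∧ 0 < w t
  hasDerivAt_x : ∀ t : ℝ, 0 ≤ t → HasDerivAt x
    (b / (x t + y t + w t) * (β * (x t) ^ 2 + ((β + 1) / 2) * x t * y t + (β / 4) * (y t) ^ 2)
      - (d + c * (x t + y t + w t)) * x t) t
  hasDerivAt_y : ∀ t : ℝ, 0 ≤ t → HasDerivAt y
    (b / (x t + y t + w t) * ((β / 2) * (y t) ^ 2 + ((β + 1) / 2) * y t * (x t + w t)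
        + 2 * x t * w t)
      - (d + c * (x t + y t + w t)) * y t) t
  hasDerivAt_w : ∀ t : ℝ, 0 ≤ t → HasDerivAt w
    (b / (x t + y t + w t) * (β * (w t) ^ 2 + ((β + 1) / 2) * w t * y t + (β / 4) * (y t) ^ 2)
      - (d + c * (x t + y t + w t)) * w t) t

namespace IsSolution_s4

variable {x y w : ℝ → ℝ}

theorem x_eq_w_of_x_zero_eq (h : IsSolution_s4 b d c β x y w) (h0 : x 0 = w 0) :
    ∀ t, 0 ≤ t → x t = w t := by
  have hN : ∀ t, 0 ≤ t → x t + y t + w t ≠ 0 := fun t ht => by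
    obtain ⟨hx, hy, hw⟩ := h.pos t ht; positivity
  have hG : ∀ t, 0 ≤ t → ContinuousAt (fun t => b / (x t + y t + w t) *
      (β * (x t + w t) + ((β + 1) / 2) * y t) - (d + c * (x t + y t + w t))) t := fun t ht => by
    have := (h.hasDerivAt_x t ht).continuousAt
    have := (h.hasDerivAt_y t ht).continuousAt
    have := (h.hasDerivAt_w t ht).continuousAt
    fun_prop (disch := exact hN t ht)
  have hu := eq_zero_of_hasDerivAt_mul_self (u := fun t => x t - w t) hG (fun t ht =>
    ((h.hasDerivAt_x t ht).sub (h.hasDerivAt_w t ht)).congr_deriv (by field_simp [hN t ht]; ring))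
    (sub_eq_zero.2 h0)
  exact fun t ht => sub_eq_zero.1 (hu t ht)

theorem hasDerivAt_ratio (h : IsSolution_s4 b d c β x y w) (hxw : ∀ t, 0 ≤ t → x t = w t)
    (t : ℝ) (ht : 0 ≤ t) :
    HasDerivAt (fun t => x t / y t) (ratioField b β (x t / y t)) t := by
  obtain ⟨hx, hy, -⟩ := h.pos t ht
  refine ((h.hasDerivAt_x t ht).div (h.hasDerivAt_y t ht) hy.ne').congr_deriv ?_
  rw [← hxw t ht, ratioField, cubic]
  field_simp
  ring

theorem hasDerivAt_log_y (h : IsSolution_s4 b d c β x y w) (hxw : ∀ t, 0 ≤ t → x t = w t)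
    (t : ℝ) (ht : 0 ≤ t) :
    HasDerivAt (fun t => log (y t)) (growthRate b d c β (x t / y t) (y t)) t := by
  obtain ⟨hx, hy, -⟩ := h.pos t ht
  refine ((h.hasDerivAt_y t ht).log hy.ne').congr_deriv ?_
  rw [← hxw t ht, growthRate]
  field_simp
  ring

end IsSolution_s4

end COD1

/-- Let z = (x, y, w) : [0, ∞) → (0, ∞)³ be a global solution of the
one-patch COD1 system. If x(0) = w(0), then z(t) converges to (δξ, ξ, δξ) as t → ∞,
where δ is the unique positive root of P(X) = X³ + (1/2)X² − (1/4)X − β/8 and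
ξ = (b(δ + β/2) − d)/((2δ + 1)c). -/
theorem cod1_one_patch_convergence_sym (b d c β : ℝ) (hdb : d < b) (hd : 0 < d) (hc : 0 < c)
    (hβ : 1 < β) (x y w : ℝ → ℝ)
    (hpos : ∀ t : ℝ, 0 ≤ t → 0 < x t ∧ 0 < y t ∧ 0 < w t)
    (hx : ∀ t : ℝ, 0 ≤ t → HasDerivAt x
      (b / (x t + y t + w t) * (β * (x t) ^ 2 + ((β + 1) / 2) * x t * y t + (β / 4) * (y t) ^ 2)
        - (d + c * (x t + y t + w t)) * x t) t)
    (hy : ∀ t : ℝ, 0 ≤ t → HasDerivAt y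
      (b / (x t + y t + w t) * ((β / 2) * (y t) ^ 2 + ((β + 1) / 2) * y t * (x t + w t)
          + 2 * x t * w t)
        - (d + c * (x t + y t + w t)) * y t) t)
    (hw : ∀ t : ℝ, 0 ≤ t → HasDerivAt w
      (b / (x t + y t + w t) * (β * (w t) ^ 2 + ((β + 1) / 2) * w t * y t + (β / 4) * (y t) ^ 2)
        - (d + c * (x t + y t + w t)) * w t) t)
    (h0 : x 0 = w 0) :
    ∃ δ : ℝ, 0 < δ ∧ δ ^ 3 + (1 / 2) * δ ^ 2 - (1 / 4) * δ - β / 8 = 0 ∧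
      Tendsto (fun t => (x t, y t, w t)) atTop
        (nhds ((δ * ((b * (δ + β / 2) - d) / ((2 * δ + 1) * c)),
                (b * (δ + β / 2) - d) / ((2 * δ + 1) * c),
                δ * ((b * (δ + β / 2) - d) / ((2 * δ + 1) * c))) : ℝ × ℝ × ℝ)) := by
  obtain ⟨δ, hδ, hPδ⟩ := COD1.exists_cubic_eq_zero hβ
  have hb : 0 < b := hd.trans hdb
  have h2δ : 0 < 2 * δ + 1 := by linarith
  set ξ := (b * (δ + β / 2) - d) / ((2 * δ + 1) * c)
  have hξ : 0 < ξ := div_pos (by nlinarith) (by positivity)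
  refine ⟨δ, by linarith, hPδ, ?_⟩
  have hsol : COD1.IsSolution_s4 b d c β x y w := ⟨hpos, hx, hy, hw⟩
  have hxw := hsol.x_eq_w_of_x_zero_eq h0
  have hnonneg := eventually_ge_atTop (0 : ℝ)
  have hr₀ : ∀ t, 0 ≤ t → 0 ≤ x t / y t := fun t ht => (div_pos (hpos t ht).1 (hpos t ht).2.1).le
  have hr : Tendsto (fun t => x t / y t) atTop (𝓝 δ) :=
    COD1.tendsto_of_hasDerivAt_ratioField hb hPδ hδ
      (hnonneg.mono fun t ht => ⟨hr₀ t ht, hsol.hasDerivAt_ratio hxw t ht⟩)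
  have hy' : Tendsto y atTop (𝓝 ξ) :=
    COD1.tendsto_of_hasDerivAt_log_growthRate hc hξ h2δ.ne'
      (COD1.growthRate_eq_zero hc.ne' h2δ.ne') hr
      (hnonneg.mono fun t ht => ⟨hr₀ t ht, (hpos t ht).2.1, hsol.hasDerivAt_log_y hxw t ht⟩)
  have hx' : Tendsto x atTop (𝓝 (δ * ξ)) :=
    (hr.mul hy').congr' (hnonneg.mono fun t ht => div_mul_cancel₀ _ (hpos t ht).2.1.ne')
  exact hx'.prodMk_nhds (hy'.prodMk_nhds (hx'.congr' (hnonneg.mono hxw)))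
end

section
/- Along any solution (x, y, w) of the one-patch COD1 system with positive coordinates, the identity x'(t) − w'(t) = (x(t) − w(t))·(bβ − d − cN(t) − b((β − 1)/2)·y(t)/N(t)) holds, where N = x + y + w. Consequently, each of the three sets {x = w}, {x > w} and {x < w} (intersected with the open positive octant) is invariant under the flow of the system. -/
/-!
Subtracting the `w`-equation from the `x`-equation, the `y²` terms cancel and `x² − w²` factors
as `(x − w)(N − y)`, so `u = x − w` solves the linear equation `u' = g(t) u` with a continuous
coefficient `g`. Hence `u(t) = u(s) · exp (∫ₛᵗ g)`, and the sign of `x − w` never changes.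
-/

open Set

theorem mul_exp_neg_integral_eq_of_hasDerivAt {u g : ℝ → ℝ} {a t : ℝ}
    (hg : ContinuousOn g (Ici a)) (hu : ∀ τ, a ≤ τ → HasDerivAt u (u τ * g τ) τ)
    (ht : a ≤ t) : u t * Real.exp (-∫ s in a..t, g s) = u a := by
  -- Extend `g` continuously to the whole line, so that its integral is differentiable everywhere.
  set G : ℝ → ℝ := fun s => g (max s a)
  have hG : Continuous G :=
    hg.comp_continuous (continuous_id.max continuous_const) fun s => le_max_right s a
  set F : ℝ → ℝ := fun s => ∫ r in a..s, G r
  have hF : ∀ s, HasDerivAt F (G s) s := fun s => (hG.integral_hasStrictDerivAt a s).hasDerivAt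
  have hderiv : ∀ τ, a ≤ τ → HasDerivAt (fun s => u s * Real.exp (-F s)) 0 τ := fun τ hτ =>
    ((hu τ hτ).mul (hF τ).neg.exp).congr_deriv (by simp only [G, max_eq_left hτ]; ring)
  have hconst : u t * Real.exp (-F t) = u a * Real.exp (-F a) :=
    constant_of_has_deriv_right_zero
      (fun τ hτ => (hderiv τ hτ.1).continuousAt.continuousWithinAt)
      (fun τ hτ => (hderiv τ hτ.1).hasDerivWithinAt) t ⟨ht, le_rfl⟩
  have hFg : F t = ∫ s in a..t, g s :=
    intervalIntegral.integral_congr fun s hs => by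
      rw [uIcc_of_le ht] at hs
      simp only [G, max_eq_left hs.1]
  simpa [hFg, F] using hconst

theorem sign_eq_sign_of_hasDerivAt_mul {u g : ℝ → ℝ} {a t : ℝ}
    (hg : ContinuousOn g (Ici a)) (hu : ∀ τ, a ≤ τ → HasDerivAt u (u τ * g τ) τ)
    (ht : a ≤ t) : SignType.sign (u t) = SignType.sign (u a) := by
  rw [← mul_exp_neg_integral_eq_of_hasDerivAt hg hu ht, sign_mul, sign_pos (Real.exp_pos _),
    mul_one]

theorem cod1_growth_sub_eq (b d c β x y w : ℝ) (hN : x + y + w ≠ 0) :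
    (b / (x + y + w) * (β * x ^ 2 + ((β + 1) / 2) * x * y + (β / 4) * y ^ 2)
        - (d + c * (x + y + w)) * x)
      - (b / (x + y + w) * (β * w ^ 2 + ((β + 1) / 2) * w * y + (β / 4) * y ^ 2)
        - (d + c * (x + y + w)) * w)
      = (x - w) * (b * β - d - c * (x + y + w) - b * ((β - 1) / 2) * (y / (x + y + w))) := by
  field_simp
  ring

theorem cod1_one_patch_difference_identity_and_invariance_general (b d c β : ℝ) (x y w : ℝ → ℝ)
    (hpos : ∀ t : ℝ, 0 ≤ t → 0 < x t ∧ 0 < y t ∧ 0 < w t)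
    (hx : ∀ t : ℝ, 0 ≤ t → HasDerivAt x
      (b / (x t + y t + w t) * (β * (x t) ^ 2 + ((β + 1) / 2) * x t * y t + (β / 4) * (y t) ^ 2)
        - (d + c * (x t + y t + w t)) * x t) t)
    (hy : ∀ t : ℝ, 0 ≤ t → HasDerivAt y
      (b / (x t + y t + w t) * ((β / 2) * (y t) ^ 2 + ((β + 1) / 2) * y t * (x t + w t)
          + 2 * x t * w t)
        - (d + c * (x t + y t + w t)) * y t) t)
    (hw : ∀ t : ℝ, 0 ≤ t → HasDerivAt w
      (b / (x t + y t + w t) * (β * (w t) ^ 2 + ((β + 1) / 2) * w t * y t + (β / 4) * (y t) ^ 2)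
        - (d + c * (x t + y t + w t)) * w t) t) :
    (∀ t : ℝ, 0 ≤ t → HasDerivAt (fun s => x s - w s)
      ((x t - w t) * (b * β - d - c * (x t + y t + w t)
        - b * ((β - 1) / 2) * (y t / (x t + y t + w t)))) t) ∧
    (∀ s : ℝ, 0 ≤ s → x s = w s → ∀ t : ℝ, s ≤ t → x t = w t) ∧
    (∀ s : ℝ, 0 ≤ s → w s < x s → ∀ t : ℝ, s ≤ t → w t < x t) ∧
    (∀ s : ℝ, 0 ≤ s → x s < w s → ∀ t : ℝ, s ≤ t → x t < w t) := by
  have hN : ∀ t ∈ Ici (0 : ℝ), x t + y t + w t ≠ 0 := fun t ht => by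
    obtain ⟨h₁, h₂, h₃⟩ := hpos t ht
    positivity
  have hderiv : ∀ t : ℝ, 0 ≤ t → HasDerivAt (fun s => x s - w s)
      ((x t - w t) * (b * β - d - c * (x t + y t + w t)
        - b * ((β - 1) / 2) * (y t / (x t + y t + w t)))) t := fun t ht =>
    ((hx t ht).sub (hw t ht)).congr_deriv (cod1_growth_sub_eq b d c β _ _ _ (hN t ht))
  have hxc : ContinuousOn x (Ici 0) := fun t ht => (hx t ht).continuousAt.continuousWithinAt
  have hyc : ContinuousOn y (Ici 0) := fun t ht => (hy t ht).continuousAt.continuousWithinAt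
  have hwc : ContinuousOn w (Ici 0) := fun t ht => (hw t ht).continuousAt.continuousWithinAt
  have hrate : ContinuousOn (fun t => b * β - d - c * (x t + y t + w t)
      - b * ((β - 1) / 2) * (y t / (x t + y t + w t))) (Ici 0) := by
    fun_prop (disch := exact hN)
  have hsign : ∀ s, 0 ≤ s → ∀ t, s ≤ t →
      SignType.sign (x t - w t) = SignType.sign (x s - w s) := fun s hs t hst =>
    sign_eq_sign_of_hasDerivAt_mul (hrate.mono (Ici_subset_Ici.2 hs))
      (fun τ hτ => hderiv τ (hs.trans hτ)) hst
  refine ⟨hderiv, fun s hs h t hst => ?_, fun s hs h t hst => ?_, fun s hs h t hst => ?_⟩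
  · have := hsign s hs t hst
    rwa [sign_eq_zero_iff.2 (sub_eq_zero.2 h), sign_eq_zero_iff, sub_eq_zero] at this
  · have := hsign s hs t hst
    rwa [sign_pos (sub_pos.2 h), sign_eq_one_iff, sub_pos] at this
  · have := hsign s hs t hst
    rwa [sign_neg (sub_neg.2 h), sign_eq_neg_one_iff, sub_neg] at this

/-- Along any solution (x, y, w) of the one-patch COD1 system with positive
coordinates, x'(t) − w'(t) = (x(t) − w(t))·(bβ − d − cN(t) − b((β − 1)/2)·y(t)/N(t)),
where N = x + y + w. Consequently each of {x = w}, {x > w}, {x < w} (in the open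
positive octant) is invariant under the flow. -/
theorem cod1_one_patch_difference_identity_and_invariance (b d c β : ℝ)
    (hdb : d < b) (hd : 0 < d) (hc : 0 < c) (hβ : 1 < β) (x y w : ℝ → ℝ)
    (hpos : ∀ t : ℝ, 0 ≤ t → 0 < x t ∧ 0 < y t ∧ 0 < w t)
    (hx : ∀ t : ℝ, 0 ≤ t → HasDerivAt x
      (b / (x t + y t + w t) * (β * (x t) ^ 2 + ((β + 1) / 2) * x t * y t + (β / 4) * (y t) ^ 2)
        - (d + c * (x t + y t + w t)) * x t) t)
    (hy : ∀ t : ℝ, 0 ≤ t → HasDerivAt y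
      (b / (x t + y t + w t) * ((β / 2) * (y t) ^ 2 + ((β + 1) / 2) * y t * (x t + w t)
          + 2 * x t * w t)
        - (d + c * (x t + y t + w t)) * y t) t)
    (hw : ∀ t : ℝ, 0 ≤ t → HasDerivAt w
      (b / (x t + y t + w t) * (β * (w t) ^ 2 + ((β + 1) / 2) * w t * y t + (β / 4) * (y t) ^ 2)
        - (d + c * (x t + y t + w t)) * w t) t) :
    (∀ t : ℝ, 0 ≤ t → HasDerivAt (fun s => x s - w s)
      ((x t - w t) * (b * β - d - c * (x t + y t + w t)
        - b * ((β - 1) / 2) * (y t / (x t + y t + w t)))) t) ∧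
    (∀ s : ℝ, 0 ≤ s → x s = w s → ∀ t : ℝ, s ≤ t → x t = w t) ∧
    (∀ s : ℝ, 0 ≤ s → w s < x s → ∀ t : ℝ, s ≤ t → w t < x t) ∧
    (∀ s : ℝ, 0 ≤ s → x s < w s → ∀ t : ℝ, s ≤ t → x t < w t) :=
  cod1_one_patch_difference_identity_and_invariance_general b d c β x y w hpos hx hy hw
end

section
/- Every fixed point (x, y, w) of the one-patch COD1 system with all three coordinates positive satisfies (x − w)·(xw − y²/4) = 0; moreover the case 4xw = y² with x ≠ w is impossible, so every such fixed point satisfies x = w. -/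
/-!
At a fixed point the per-capita factor `b / N` cancels, so the three birth terms equal
`m x`, `m y`, `m w` for one common ratio `m`. The difference of the `AA` and `aa` equations
factors as `(x - w) (β (x + w) + (β + 1) y / 2 - m)`. If `x ≠ w`, this pins down `m`; the `AA`
equation then gives `y² = 4 x w`, and the `Aa` equation collapses to `(β - 1) y (x + w) / 2 = 0`,
which is impossible for `β > 1`.
-/

theorem eq_div_mul_of_mul_sub_mul_eq_zero {K : Type*} [Field K] {r s p q : K} (hr : r ≠ 0)
    (h : r * p - s * q = 0) : p = s / r * q := by
  field_simp
  linear_combination h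

theorem cod1_eq_of_births_proportional {β m x y w : ℝ} (hβ : 1 < β) (hy : 0 < y)
    (hxw : 0 < x + w)
    (h₁ : β * x ^ 2 + ((β + 1) / 2) * x * y + (β / 4) * y ^ 2 = m * x)
    (h₂ : (β / 2) * y ^ 2 + ((β + 1) / 2) * y * (x + w) + 2 * x * w = m * y)
    (h₃ : β * w ^ 2 + ((β + 1) / 2) * w * y + (β / 4) * y ^ 2 = m * w) :
    x = w := by
  by_contra hne
  have hm : m = β * (x + w) + (β + 1) / 2 * y := by
    have hfactor : (x - w) * (β * (x + w) + (β + 1) / 2 * y - m) = 0 := by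
      linear_combination h₁ - h₃
    linarith [(mul_eq_zero.mp hfactor).resolve_left (sub_ne_zero.mpr hne)]
  have hy_sq : y ^ 2 = 4 * x * w := by
    have hβy : β * (y ^ 2 - 4 * x * w) = 0 := by linear_combination 4 * h₁ + 4 * x * hm
    linarith [(mul_eq_zero.mp hβy).resolve_left (by positivity)]
  have hzero : (β - 1) / 2 * y * (x + w) = 0 := by
    linear_combination -h₂ - y * hm - (1 / 2) * hy_sq
  have hpos : 0 < (β - 1) / 2 * y * (x + w) := by
    have : 0 < β - 1 := by linarith
    positivity
  exact hpos.ne' hzero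

theorem cod1_one_patch_positive_fixed_point_symmetric_general (b d c β : ℝ)
    (hdb : d < b) (hd : 0 < d) (hβ : 1 < β)
    (x y w : ℝ) (hx : 0 < x) (hy : 0 < y) (hw : 0 < w)
    (heq1 : b / (x + y + w) * (β * x ^ 2 + ((β + 1) / 2) * x * y + (β / 4) * y ^ 2)
      - (d + c * (x + y + w)) * x = 0)
    (heq2 : b / (x + y + w) * ((β / 2) * y ^ 2 + ((β + 1) / 2) * y * (x + w) + 2 * x * w)
      - (d + c * (x + y + w)) * y = 0)
    (heq3 : b / (x + y + w) * (β * w ^ 2 + ((β + 1) / 2) * w * y + (β / 4) * y ^ 2)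
      - (d + c * (x + y + w)) * w = 0) :
    (x - w) * (x * w - y ^ 2 / 4) = 0 ∧ ¬(4 * x * w = y ^ 2 ∧ x ≠ w) ∧ x = w := by
  have hr : b / (x + y + w) ≠ 0 := div_ne_zero (by linarith) (by linarith)
  have hxw : x = w := cod1_eq_of_births_proportional hβ hy (by linarith)
    (eq_div_mul_of_mul_sub_mul_eq_zero hr heq1) (eq_div_mul_of_mul_sub_mul_eq_zero hr heq2)
    (eq_div_mul_of_mul_sub_mul_eq_zero hr heq3)
  exact ⟨by rw [hxw]; ring, fun h => h.2 hxw, hxw⟩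

/-- Every fixed point (x, y, w) of the one-patch COD1 system with all three
coordinates positive satisfies (x − w)·(xw − y²/4) = 0; moreover the case 4xw = y² with
x ≠ w is impossible, so every such fixed point satisfies x = w. -/
theorem cod1_one_patch_positive_fixed_point_symmetric (b d c β : ℝ)
    (hdb : d < b) (hd : 0 < d) (hc : 0 < c) (hβ : 1 < β)
    (x y w : ℝ) (hx : 0 < x) (hy : 0 < y) (hw : 0 < w)
    (heq1 : b / (x + y + w) * (β * x ^ 2 + ((β + 1) / 2) * x * y + (β / 4) * y ^ 2)
      - (d + c * (x + y + w)) * x = 0)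
    (heq2 : b / (x + y + w) * ((β / 2) * y ^ 2 + ((β + 1) / 2) * y * (x + w) + 2 * x * w)
      - (d + c * (x + y + w)) * y = 0)
    (heq3 : b / (x + y + w) * (β * w ^ 2 + ((β + 1) / 2) * w * y + (β / 4) * y ^ 2)
      - (d + c * (x + y + w)) * w = 0) :
    (x - w) * (x * w - y ^ 2 / 4) = 0 ∧ ¬(4 * x * w = y ^ 2 ∧ x ≠ w) ∧ x = w :=
  cod1_one_patch_positive_fixed_point_symmetric_general b d c β hdb hd hβ x y w hx hy hw heq1 heq2
    heq3
end

section
/- Along any solution (x, y, w) of the one-patch COD1 system with positive coordinates satisfying x(t) > w(t), the function W₂(t) = ln((x(t) + w(t) + β y(t))/(x(t) − w(t))) satisfies (d/dt)W₂(t) = −(b(β − 1)/(2 N(t) (x(t) + w(t) + β y(t))))·β y(t)(x(t) + w(t)) ≤ 0, where N = x + y + w; in particular W₂ is nonincreasing along such solutions. -/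
/-!
Write `U = x + w + β y` and `V = x - w`, so that `W₂ = log (U / V)` and `W₂' = U'/U - V'/V`.
The mortality term `-(d + c N)` is the same per-capita rate for every genotype, so it cancels in
this difference of per-capita growth rates, and only the birth terms remain. For `V` these factor
as `(b / N) (x - w) (β (x + w) + (β + 1) y / 2)`, and comparing with the birth terms of `U` leaves
`-(b (β - 1) / (2 N U)) β y (x + w)`, which is nonpositive since `β > 1` and `b > 0`.
-/

open Set

/-- Components of the one-patch COD1 vector field at the state `(x, y, w) = (#AA, #Aa, #aa)`. -/
noncomputable def cod1X (b d c β x y w : ℝ) : ℝ :=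
  b / (x + y + w) * (β * x ^ 2 + ((β + 1) / 2) * x * y + (β / 4) * y ^ 2)
    - (d + c * (x + y + w)) * x

noncomputable def cod1Y (b d c β x y w : ℝ) : ℝ :=
  b / (x + y + w) * ((β / 2) * y ^ 2 + ((β + 1) / 2) * y * (x + w) + 2 * x * w)
    - (d + c * (x + y + w)) * y

noncomputable def cod1W (b d c β x y w : ℝ) : ℝ :=
  b / (x + y + w) * (β * w ^ 2 + ((β + 1) / 2) * w * y + (β / 4) * y ^ 2)
    - (d + c * (x + y + w)) * w

theorem cod1_logRate_sub (b d c β x y w : ℝ) (hN : x + y + w ≠ 0)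
    (hU : x + w + β * y ≠ 0) (hV : x - w ≠ 0) :
    (cod1X b d c β x y w + cod1W b d c β x y w + β * cod1Y b d c β x y w) / (x + w + β * y)
      - (cod1X b d c β x y w - cod1W b d c β x y w) / (x - w)
      = -(b * (β - 1) / (2 * (x + y + w) * (x + w + β * y))) * (β * y * (x + w)) := by
  rw [div_sub_div _ _ hU hV, neg_mul, div_mul_eq_mul_div, ← neg_div,
    div_eq_div_iff (mul_ne_zero hU hV) (by simp [hN, hU])]
  unfold cod1X cod1Y cod1W
  field_simp
  ring

theorem cod1_logRate_nonpos {b β x y w : ℝ} (hb : 0 ≤ b) (hβ : 1 ≤ β)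
    (hx : 0 ≤ x) (hy : 0 ≤ y) (hw : 0 ≤ w) :
    -(b * (β - 1) / (2 * (x + y + w) * (x + w + β * y))) * (β * y * (x + w)) ≤ 0 := by
  have hβ₀ : 0 ≤ β := zero_le_one.trans hβ
  have hcoef : 0 ≤ b * (β - 1) / (2 * (x + y + w) * (x + w + β * y)) := by
    apply div_nonneg <;> [exact mul_nonneg hb (sub_nonneg.2 hβ); positivity]
  have hprod : 0 ≤ β * y * (x + w) := by positivity
  simpa only [neg_mul, neg_nonpos] using mul_nonneg hcoef hprod

theorem HasDerivAt.log_div {u v : ℝ → ℝ} {u' v' t : ℝ} (hu : HasDerivAt u u' t)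
    (hv : HasDerivAt v v' t) (hut : u t ≠ 0) (hvt : v t ≠ 0) :
    HasDerivAt (fun s => Real.log (u s / v s)) (u' / u t - v' / v t) t := by
  convert (hu.fun_div hv hvt).log (div_ne_zero hut hvt) using 1
  field_simp

theorem antitoneOn_of_hasDerivAt_nonpos {D : Set ℝ} (hD : Convex ℝ D) {f f' : ℝ → ℝ}
    (hf : ∀ t ∈ D, HasDerivAt f (f' t) t) (hf' : ∀ t ∈ interior D, f' t ≤ 0) :
    AntitoneOn f D :=
  antitoneOn_of_hasDerivWithinAt_nonpos hD
    (fun t ht => (hf t ht).continuousAt.continuousWithinAt)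
    (fun t ht => (hf t (interior_subset ht)).hasDerivWithinAt) hf'

theorem cod1_one_patch_lyapunov_W2_general (b d c β : ℝ)
    (hdb : d < b) (hd : 0 < d) (hβ : 1 < β) (x y w : ℝ → ℝ)
    (hpos : ∀ t : ℝ, 0 ≤ t → 0 < x t ∧ 0 < y t ∧ 0 < w t)
    (hgt : ∀ t : ℝ, 0 ≤ t → w t < x t)
    (hx : ∀ t : ℝ, 0 ≤ t → HasDerivAt x
      (b / (x t + y t + w t) * (β * (x t) ^ 2 + ((β + 1) / 2) * x t * y t + (β / 4) * (y t) ^ 2)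
        - (d + c * (x t + y t + w t)) * x t) t)
    (hy : ∀ t : ℝ, 0 ≤ t → HasDerivAt y
      (b / (x t + y t + w t) * ((β / 2) * (y t) ^ 2 + ((β + 1) / 2) * y t * (x t + w t)
          + 2 * x t * w t)
        - (d + c * (x t + y t + w t)) * y t) t)
    (hw : ∀ t : ℝ, 0 ≤ t → HasDerivAt w
      (b / (x t + y t + w t) * (β * (w t) ^ 2 + ((β + 1) / 2) * w t * y t + (β / 4) * (y t) ^ 2)
        - (d + c * (x t + y t + w t)) * w t) t) :
    (∀ t : ℝ, 0 ≤ t → HasDerivAt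
      (fun s => Real.log ((x s + w s + β * y s) / (x s - w s)))
      (-(b * (β - 1) / (2 * (x t + y t + w t) * (x t + w t + β * y t)))
        * (β * y t * (x t + w t))) t) ∧
    (∀ t : ℝ, 0 ≤ t →
      -(b * (β - 1) / (2 * (x t + y t + w t) * (x t + w t + β * y t)))
        * (β * y t * (x t + w t)) ≤ 0) ∧
    (∀ s t : ℝ, 0 ≤ s → s ≤ t →
      Real.log ((x t + w t + β * y t) / (x t - w t))
        ≤ Real.log ((x s + w s + β * y s) / (x s - w s))) := by
  have hderiv : ∀ t : ℝ, 0 ≤ t → HasDerivAt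
      (fun s => Real.log ((x s + w s + β * y s) / (x s - w s)))
      (-(b * (β - 1) / (2 * (x t + y t + w t) * (x t + w t + β * y t)))
        * (β * y t * (x t + w t))) t := by
    intro t ht
    obtain ⟨hx₀, hy₀, hw₀⟩ := hpos t ht
    have hV : 0 < x t - w t := sub_pos.2 (hgt t ht)
    rw [← cod1_logRate_sub b d c β _ _ _ (by positivity) (by positivity) hV.ne']
    exact HasDerivAt.log_div (((hx t ht).add (hw t ht)).add ((hy t ht).const_mul β))
      ((hx t ht).sub (hw t ht)) (by positivity) hV.ne'
  have hrate : ∀ t : ℝ, 0 ≤ t →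
      -(b * (β - 1) / (2 * (x t + y t + w t) * (x t + w t + β * y t)))
        * (β * y t * (x t + w t)) ≤ 0 := fun t ht =>
    let ⟨hx₀, hy₀, hw₀⟩ := hpos t ht
    cod1_logRate_nonpos (hd.trans hdb).le hβ.le hx₀.le hy₀.le hw₀.le
  refine ⟨hderiv, hrate, fun s t hs hst => ?_⟩
  have hanti := antitoneOn_of_hasDerivAt_nonpos (convex_Ici 0) hderiv
    (fun t ht => hrate t (interior_subset (s := Ici (0 : ℝ)) ht))
  exact hanti hs (hs.trans hst) hst

/-- Along any solution (x, y, w) of the one-patch COD1 system with positive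
coordinates satisfying x(t) > w(t), the function
W₂(t) = ln((x(t) + w(t) + β y(t))/(x(t) − w(t))) satisfies
(d/dt)W₂(t) = −(b(β − 1)/(2 N(t) (x(t) + w(t) + β y(t))))·β y(t)(x(t) + w(t)) ≤ 0,
where N = x + y + w; in particular W₂ is nonincreasing along such solutions. -/
theorem cod1_one_patch_lyapunov_W2 (b d c β : ℝ)
    (hdb : d < b) (hd : 0 < d) (hc : 0 < c) (hβ : 1 < β) (x y w : ℝ → ℝ)
    (hpos : ∀ t : ℝ, 0 ≤ t → 0 < x t ∧ 0 < y t ∧ 0 < w t)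
    (hgt : ∀ t : ℝ, 0 ≤ t → w t < x t)
    (hx : ∀ t : ℝ, 0 ≤ t → HasDerivAt x
      (b / (x t + y t + w t) * (β * (x t) ^ 2 + ((β + 1) / 2) * x t * y t + (β / 4) * (y t) ^ 2)
        - (d + c * (x t + y t + w t)) * x t) t)
    (hy : ∀ t : ℝ, 0 ≤ t → HasDerivAt y
      (b / (x t + y t + w t) * ((β / 2) * (y t) ^ 2 + ((β + 1) / 2) * y t * (x t + w t)
          + 2 * x t * w t)
        - (d + c * (x t + y t + w t)) * y t) t)
    (hw : ∀ t : ℝ, 0 ≤ t → HasDerivAt w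
      (b / (x t + y t + w t) * (β * (w t) ^ 2 + ((β + 1) / 2) * w t * y t + (β / 4) * (y t) ^ 2)
        - (d + c * (x t + y t + w t)) * w t) t) :
    (∀ t : ℝ, 0 ≤ t → HasDerivAt
      (fun s => Real.log ((x s + w s + β * y s) / (x s - w s)))
      (-(b * (β - 1) / (2 * (x t + y t + w t) * (x t + w t + β * y t)))
        * (β * y t * (x t + w t))) t) ∧
    (∀ t : ℝ, 0 ≤ t →
      -(b * (β - 1) / (2 * (x t + y t + w t) * (x t + w t + β * y t)))
        * (β * y t * (x t + w t)) ≤ 0) ∧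
    (∀ s t : ℝ, 0 ≤ s → s ≤ t →
      Real.log ((x t + w t + β * y t) / (x t - w t))
        ≤ Real.log ((x s + w s + β * y s) / (x s - w s))) :=
  cod1_one_patch_lyapunov_W2_general b d c β hdb hd hβ x y w hpos hgt hx hy hw
end

section
/- Every fixed point (x, y, w) of the one-patch DOM system with all three coordinates positive satisfies β y² = 4xw and x + y = w, and equals the point ((b(β+1) − 2d)/(4c))·((√(β+1) − 1)/(√(β+1) + 1), 2/(√(β+1) + 1), 1); conversely this point is a fixed point of the system. -/
/-!
Clearing the denominator `N = x + y + w`, the `AA` and `Aa` equations combine to the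
Hardy–Weinberg relation `β y² = 4 x w`. Given it, the `aa` equation becomes the balance
`b (β w + x + y) = (d + c N) N`, and comparing with the `Aa` equation leaves
`(β - 1) y (x + y - w) = 0`, so `w = x + y`. Then `N = 2 w` and the balance determines `w`,
while the Hardy–Weinberg relation reads `(√(β + 1) y)² = (2 w - y)²`, which determines `y`.
The converse is a direct substitution.
-/

namespace DomOnePatch

noncomputable section

def rateAA (b d c β x y w : ℝ) : ℝ :=
  b * β / (x + y + w) * (x + y / 2) ^ 2 - (d + c * (x + y + w)) * x

def rateAa (b d c β x y w : ℝ) : ℝ :=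
  b / (x + y + w) * (β * y + 2 * w) * (x + y / 2) - (d + c * (x + y + w)) * y

def rateaa (b d c β x y w : ℝ) : ℝ :=
  b / (x + y + w) * (β * w ^ 2 + w * y + (β / 4) * y ^ 2) - (d + c * (x + y + w)) * w

end

section Rates

variable {b d c β x y w : ℝ}

theorem rateAA_eq_zero_iff (hN : x + y + w ≠ 0) :
    rateAA b d c β x y w = 0 ↔
      b * β * (x + y / 2) ^ 2 = (d + c * (x + y + w)) * x * (x + y + w) := by
  rw [rateAA, sub_eq_zero, div_mul_eq_mul_div, div_eq_iff hN]

theorem rateAa_eq_zero_iff (hN : x + y + w ≠ 0) :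
    rateAa b d c β x y w = 0 ↔
      b * (β * y + 2 * w) * (x + y / 2) = (d + c * (x + y + w)) * y * (x + y + w) := by
  rw [rateAa, sub_eq_zero, div_mul_eq_mul_div, div_mul_eq_mul_div, div_eq_iff hN]

theorem rateaa_eq_zero_iff (hN : x + y + w ≠ 0) :
    rateaa b d c β x y w = 0 ↔
      b * (β * w ^ 2 + w * y + β / 4 * y ^ 2) = (d + c * (x + y + w)) * w * (x + y + w) := by
  rw [rateaa, sub_eq_zero, div_mul_eq_mul_div, div_eq_iff hN]

end Rates

section ClearedEquations

variable {b β μ N x y w : ℝ}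

theorem hardy_weinberg_of_fixed_point (hb : b ≠ 0) (hp : x + y / 2 ≠ 0)
    (hAA : b * β * (x + y / 2) ^ 2 = μ * x * N)
    (hAa : b * (β * y + 2 * w) * (x + y / 2) = μ * y * N) :
    β * y ^ 2 = 4 * x * w := by
  have h : b * (x + y / 2) * (β * y ^ 2 - 4 * x * w) = 0 := by
    linear_combination 2 * y * hAA - 2 * x * hAa
  linarith [(mul_eq_zero.1 h).resolve_left (mul_ne_zero hb hp)]

theorem aa_balance_of_hardy_weinberg (hw : w ≠ 0) (hHW : β * y ^ 2 = 4 * x * w)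
    (haa : b * (β * w ^ 2 + w * y + β / 4 * y ^ 2) = μ * w * N) :
    b * (β * w + x + y) = μ * N :=
  mul_left_cancel₀ hw (by linear_combination haa - b / 4 * hHW)

theorem add_eq_of_aa_balance (hb : b ≠ 0) (hβ : β ≠ 1) (hy : y ≠ 0)
    (hHW : β * y ^ 2 = 4 * x * w)
    (hAa : b * (β * y + 2 * w) * (x + y / 2) = μ * y * N)
    (hbal : b * (β * w + x + y) = μ * N) :
    x + y = w := by
  have h : b * ((β - 1) * y) * (x + y - w) = 0 := by
    linear_combination hAa - y * hbal + b / 2 * hHW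
  linarith [(mul_eq_zero.1 h).resolve_left (mul_ne_zero hb (mul_ne_zero (sub_ne_zero.2 hβ) hy))]

end ClearedEquations

section Solution

variable {b d c β x y w : ℝ}

theorem eq_of_aa_balance (hc : c ≠ 0) (hw : w ≠ 0) (hxy : x + y = w)
    (hbal : b * (β * w + x + y) = (d + c * (x + y + w)) * (x + y + w)) :
    w = (b * (β + 1) - 2 * d) / (4 * c) := by
  rw [eq_div_iff (mul_ne_zero four_ne_zero hc)]
  refine mul_left_cancel₀ hw ?_
  rw [← hxy] at hbal ⊢
  linear_combination -hbal

theorem y_eq_of_hardy_weinberg (hβ : -1 ≤ β) (hx : 0 ≤ x) (hy : 0 ≤ y)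
    (hHW : β * y ^ 2 = 4 * x * w) (hxy : x + y = w) :
    y = w * (2 / (√(β + 1) + 1)) := by
  have hs := Real.sq_sqrt (neg_le_iff_add_nonneg.1 hβ)
  have hsq : (√(β + 1) * y) ^ 2 = (2 * w - y) ^ 2 := by
    rw [← hxy] at hHW ⊢
    linear_combination y ^ 2 * hs + hHW
  have hsy : √(β + 1) * y = 2 * w - y :=
    (sq_eq_sq₀ (by positivity) (by linarith)).1 hsq
  rw [mul_div_assoc', eq_div_iff (by positivity)]
  linear_combination hsy

theorem x_eq_of_hardy_weinberg (hβ : -1 ≤ β) (hx : 0 ≤ x) (hy : 0 ≤ y)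
    (hHW : β * y ^ 2 = 4 * x * w) (hxy : x + y = w) :
    x = w * ((√(β + 1) - 1) / (√(β + 1) + 1)) := by
  have hy' := y_eq_of_hardy_weinberg hβ hx hy hHW hxy
  have hs1 : √(β + 1) + 1 ≠ 0 := by positivity
  rw [eq_sub_of_add_eq hxy, hy']
  field_simp
  ring

theorem rates_eq_zero_of_eq {s K : ℝ} (hs : s ^ 2 = β + 1) (hs1 : s + 1 ≠ 0)
    (hK : 4 * c * K = b * (β + 1) - 2 * d) :
    rateAA b d c β (K * ((s - 1) / (s + 1))) (K * (2 / (s + 1))) (K * 1) = 0 ∧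
    rateAa b d c β (K * ((s - 1) / (s + 1))) (K * (2 / (s + 1))) (K * 1) = 0 ∧
    rateaa b d c β (K * ((s - 1) / (s + 1))) (K * (2 / (s + 1))) (K * 1) = 0 := by
  rcases eq_or_ne K 0 with rfl | hK0
  · simp [rateAA, rateAa, rateaa]
  have hN : K * ((s - 1) / (s + 1)) + K * (2 / (s + 1)) + K * 1 = 2 * K := by
    field_simp
    ring
  obtain rfl : β = s ^ 2 - 1 := by linarith
  obtain rfl : d = b * s ^ 2 / 2 - 2 * c * K := by linarith
  have hN0 : 2 * K ≠ 0 := mul_ne_zero two_ne_zero hK0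
  rw [rateAA_eq_zero_iff (hN ▸ hN0), rateAa_eq_zero_iff (hN ▸ hN0),
    rateaa_eq_zero_iff (hN ▸ hN0), hN]
  refine ⟨?_, ?_, ?_⟩ <;> field_simp <;> ring

end Solution

end DomOnePatch

open DomOnePatch in
theorem dom_one_patch_positive_fixed_point_general (b d c β : ℝ)
    (hd : 0 < d) (hc : 0 < c) (hβ : 1 < β) :
    (∀ x y w : ℝ, 0 < x → 0 < y → 0 < w →
      b * β / (x + y + w) * (x + y / 2) ^ 2 - (d + c * (x + y + w)) * x = 0 →
      b / (x + y + w) * (β * y + 2 * w) * (x + y / 2) - (d + c * (x + y + w)) * y = 0 →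
      b / (x + y + w) * (β * w ^ 2 + w * y + (β / 4) * y ^ 2)
        - (d + c * (x + y + w)) * w = 0 →
      (β * y ^ 2 = 4 * x * w ∧ x + y = w ∧
        x = (b * (β + 1) - 2 * d) / (4 * c)
            * ((Real.sqrt (β + 1) - 1) / (Real.sqrt (β + 1) + 1)) ∧
        y = (b * (β + 1) - 2 * d) / (4 * c) * (2 / (Real.sqrt (β + 1) + 1)) ∧
        w = (b * (β + 1) - 2 * d) / (4 * c) * 1)) ∧
    (∀ x y w : ℝ,
      x = (b * (β + 1) - 2 * d) / (4 * c)
          * ((Real.sqrt (β + 1) - 1) / (Real.sqrt (β + 1) + 1)) →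
      y = (b * (β + 1) - 2 * d) / (4 * c) * (2 / (Real.sqrt (β + 1) + 1)) →
      w = (b * (β + 1) - 2 * d) / (4 * c) * 1 →
      (b * β / (x + y + w) * (x + y / 2) ^ 2 - (d + c * (x + y + w)) * x = 0 ∧
       b / (x + y + w) * (β * y + 2 * w) * (x + y / 2) - (d + c * (x + y + w)) * y = 0 ∧
       b / (x + y + w) * (β * w ^ 2 + w * y + (β / 4) * y ^ 2)
         - (d + c * (x + y + w)) * w = 0)) := by
  refine ⟨fun x y w hx hy hw hAA hAa haa => ?_, fun x y w hx hy hw => ?_⟩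
  · have hN : x + y + w ≠ 0 := by positivity
    replace hAA := (rateAA_eq_zero_iff hN).1 hAA
    replace hAa := (rateAa_eq_zero_iff hN).1 hAa
    replace haa := (rateaa_eq_zero_iff hN).1 haa
    have hb : b ≠ 0 := by
      rintro rfl
      have : 0 < (d + c * (x + y + w)) * x * (x + y + w) := by positivity
      simp only [zero_mul] at hAA
      linarith
    have hHW := hardy_weinberg_of_fixed_point hb (by positivity) hAA hAa
    have hbal := aa_balance_of_hardy_weinberg hw.ne' hHW haa
    have hxy := add_eq_of_aa_balance hb hβ.ne' hy.ne' hHW hAa hbal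
    have hwK := eq_of_aa_balance hc.ne' hw.ne' hxy hbal
    have hβ' : -1 ≤ β := by linarith
    refine ⟨hHW, hxy, ?_, ?_, by rw [mul_one, hwK]⟩ <;> rw [← hwK]
    · exact x_eq_of_hardy_weinberg hβ' hx.le hy.le hHW hxy
    · exact y_eq_of_hardy_weinberg hβ' hx.le hy.le hHW hxy
  · subst hx hy hw
    refine rates_eq_zero_of_eq (Real.sq_sqrt (by linarith)) (by positivity) ?_
    field_simp

/-- Every fixed point (x, y, w) of the one-patch DOM system with all three
coordinates positive satisfies βy² = 4xw and x + y = w, and equals the point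
((b(β+1) − 2d)/(4c))·((√(β+1) − 1)/(√(β+1) + 1), 2/(√(β+1) + 1), 1); conversely this
point is a fixed point of the system. -/
theorem dom_one_patch_positive_fixed_point (b d c β : ℝ)
    (hdb : d < b) (hd : 0 < d) (hc : 0 < c) (hβ : 1 < β) :
    (∀ x y w : ℝ, 0 < x → 0 < y → 0 < w →
      b * β / (x + y + w) * (x + y / 2) ^ 2 - (d + c * (x + y + w)) * x = 0 →
      b / (x + y + w) * (β * y + 2 * w) * (x + y / 2) - (d + c * (x + y + w)) * y = 0 →
      b / (x + y + w) * (β * w ^ 2 + w * y + (β / 4) * y ^ 2)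
        - (d + c * (x + y + w)) * w = 0 →
      (β * y ^ 2 = 4 * x * w ∧ x + y = w ∧
        x = (b * (β + 1) - 2 * d) / (4 * c)
            * ((Real.sqrt (β + 1) - 1) / (Real.sqrt (β + 1) + 1)) ∧
        y = (b * (β + 1) - 2 * d) / (4 * c) * (2 / (Real.sqrt (β + 1) + 1)) ∧
        w = (b * (β + 1) - 2 * d) / (4 * c) * 1)) ∧
    (∀ x y w : ℝ,
      x = (b * (β + 1) - 2 * d) / (4 * c)
          * ((Real.sqrt (β + 1) - 1) / (Real.sqrt (β + 1) + 1)) →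
      y = (b * (β + 1) - 2 * d) / (4 * c) * (2 / (Real.sqrt (β + 1) + 1)) →
      w = (b * (β + 1) - 2 * d) / (4 * c) * 1 →
      (b * β / (x + y + w) * (x + y / 2) ^ 2 - (d + c * (x + y + w)) * x = 0 ∧
       b / (x + y + w) * (β * y + 2 * w) * (x + y / 2) - (d + c * (x + y + w)) * y = 0 ∧
       b / (x + y + w) * (β * w ^ 2 + w * y + (β / 4) * y ^ 2)
         - (d + c * (x + y + w)) * w = 0)) :=
  dom_one_patch_positive_fixed_point_general b d c β hd hc hβ
end

section
/- Let z = (x, y, w) : [0, ∞) → (0, ∞)³ be a global solution of the one-patch DOM system. If x(0) ≥ w(0), then z(t) converges to (ζ, 0, 0) as t → ∞. -/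
/-!
Let `N = x + y + w`, `u = (w + y/2)/N` (frequency of the recessive allele) and `g = w/N`.
The flow preserves `w ≤ x` (at `w = x`, `(x - w)' = b(β-1)wy/N > 0`), and then
`u' = -b(β-1) g (1-u)(1-2g) < 0`. If `u` stayed above some `δ > 0`, the `Aa × Aa` matings would
keep `g` bounded below, so `u` would decrease at a uniform rate, which is absurd; hence `u → 0`
and `y, w → 0`. Finally `N' = (bβ - d - cN - ε)N` with `0 ≤ ε ≤ 2b(β-1)u → 0`, a logistic
equation with vanishing perturbation, so `N → (bβ - d)/c`.
-/

open Filter Set Topology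

theorem le_of_hasDerivAt_neg_at_eq {f f' : ℝ → ℝ} {T a : ℝ}
    (hf : ∀ t ≥ T, HasDerivAt f (f' t) t) (hT : f T ≤ a)
    (h : ∀ t ≥ T, f t = a → f' t < 0) : ∀ t ≥ T, f t ≤ a := fun _ ht =>
  image_le_of_deriv_right_lt_deriv_boundary (B := fun _ => a) (B' := 0)
    (fun s hs => (hf s hs.1).continuousAt.continuousWithinAt)
    (fun s hs => (hf s hs.1).hasDerivWithinAt) hT (fun _ => hasDerivAt_const _ _)
    (fun s hs => h s hs.1) ⟨ht, le_rfl⟩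

theorem eventually_le_of_hasDerivAt_le_neg_s11 {f f' : ℝ → ℝ} {a ρ : ℝ} (hρ : 0 < ρ)
    (hf : ∀ᶠ t in atTop, HasDerivAt f (f' t) t) (h : ∀ᶠ t in atTop, a ≤ f t → f' t ≤ -ρ) :
    ∀ᶠ t in atTop, f t ≤ a := by
  obtain ⟨T, hT⟩ := eventually_atTop.1 (hf.and h)
  obtain ⟨t₀, ht₀, hft₀⟩ : ∃ t₀ ≥ T, f t₀ ≤ a := by
    by_contra! hgt
    -- otherwise `f` decreases at rate `ρ` forever
    have hlin : ∀ t ≥ T, f t ≤ f T - ρ * (t - T) := fun _ ht =>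
      image_le_of_deriv_right_le_deriv_boundary (B := fun t => f T - ρ * (t - T))
        (B' := fun _ => -ρ) (fun s hs => (hT s hs.1).1.continuousAt.continuousWithinAt)
        (fun s hs => (hT s hs.1).1.hasDerivWithinAt) (by simp) (by fun_prop)
        (fun s _ => (((hasDerivAt_id s).sub_const T).const_mul ρ).const_sub (f T)
          |>.hasDerivWithinAt.congr_deriv (by simp))
        (fun s hs => (hT s hs.1).2 (hgt s hs.1).le) ⟨ht, le_rfl⟩
    have hgap : 0 ≤ (f T - a) / ρ := div_nonneg (sub_nonneg.2 (hgt T le_rfl).le) hρ.le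
    have hρgap : ρ * ((f T - a) / ρ) = f T - a := mul_div_cancel₀ _ hρ.ne'
    have hfar := hlin (T + (f T - a) / ρ + 1) (by linarith)
    linarith [hgt (T + (f T - a) / ρ + 1) (by linarith)]
  filter_upwards [eventually_ge_atTop t₀] with t ht
  exact le_of_hasDerivAt_neg_at_eq (fun s hs => (hT s (ht₀.trans hs)).1) hft₀
    (fun s hs hs' => ((hT s (ht₀.trans hs)).2 hs'.ge).trans_lt (neg_neg_of_pos hρ)) t ht

theorem tendsto_of_hasDerivAt_logistic_s11 {f ε : ℝ → ℝ} {r c : ℝ} (hr : 0 < r) (hc : 0 < c)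
    (hf : ∀ᶠ t in atTop, HasDerivAt f ((r - c * f t - ε t) * f t) t)
    (hpos : ∀ᶠ t in atTop, 0 < f t) (hε : ∀ᶠ t in atTop, 0 ≤ ε t)
    (hε0 : Tendsto ε atTop (𝓝 0)) : Tendsto f atTop (𝓝 (r / c)) := by
  have hrc : 0 < r / c := div_pos hr hc
  refine tendsto_order.2 ⟨fun a ha => ?_, fun a ha => ?_⟩
  · obtain ⟨s, hs0, has, hsr⟩ : ∃ s, 0 < s ∧ a < s ∧ s < r / c :=
      ⟨(max a 0 + r / c) / 2, by linarith [le_max_right a 0], by linarith [le_max_left a 0],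
        by linarith [max_lt ha hrc]⟩
    have hκ : 0 < (r - c * s) / 2 := by
      have := (lt_div_iff₀ hc).1 hsr
      linarith
    -- below `s` the growth rate of `log f` is bounded away from zero
    have hlog := eventually_le_of_hasDerivAt_le_neg_s11 (f := fun t => -Real.log (f t))
      (a := -Real.log s) hκ
      (by filter_upwards [hf, hpos] with t hft hft0 using (hft.log hft0.ne').neg)
      (by
        filter_upwards [hpos, hε, hε0.eventually (gt_mem_nhds hκ)] with t hft0 hεt hεκ hts
        have hfs : f t ≤ s := (Real.log_le_log_iff hft0 hs0).1 (neg_le_neg_iff.1 hts)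
        rw [mul_div_cancel_right₀ _ hft0.ne']
        nlinarith)
    filter_upwards [hlog, hpos] with t ht hft0
    exact has.trans_le ((Real.log_le_log_iff hs0 hft0).1 (neg_le_neg_iff.1 ht))
  · obtain ⟨s, hrs, hsa⟩ : ∃ s, r / c < s ∧ s < a := ⟨(a + r / c) / 2, by linarith, by linarith⟩
    have hcs : r < c * s := (div_lt_iff₀' hc).1 hrs
    have hρ : 0 < (c * s - r) * s := mul_pos (by linarith) (hrc.trans hrs)
    have hle := eventually_le_of_hasDerivAt_le_neg_s11 (a := s) hρ hf
      (by
        filter_upwards [hpos, hε] with t hft0 hεt hft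
        have h1 : (r - c * f t - ε t) * f t ≤ (r - c * s) * f t :=
          mul_le_mul_of_nonneg_right (by nlinarith) hft0.le
        have h2 : (r - c * s) * f t ≤ (r - c * s) * s :=
          mul_le_mul_of_nonpos_left hft (by linarith)
        linarith)
    filter_upwards [hle] with t ht
    exact ht.trans_lt hsa

structure IsDOMSolution (b d c β : ℝ) (x y w : ℝ → ℝ) : Prop where
  pos : ∀ t : ℝ, 0 ≤ t → 0 < x t ∧ 0 < y t ∧ 0 < w t
  hasDerivAt_x : ∀ t : ℝ, 0 ≤ t → HasDerivAt x
      (b * β / (x t + y t + w t) * (x t + y t / 2) ^ 2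
        - (d + c * (x t + y t + w t)) * x t) t
  hasDerivAt_y : ∀ t : ℝ, 0 ≤ t → HasDerivAt y
      (b / (x t + y t + w t) * (β * y t + 2 * w t) * (x t + y t / 2)
        - (d + c * (x t + y t + w t)) * y t) t
  hasDerivAt_w : ∀ t : ℝ, 0 ≤ t → HasDerivAt w
      (b / (x t + y t + w t) * (β * (w t) ^ 2 + w t * y t + (β / 4) * (y t) ^ 2)
        - (d + c * (x t + y t + w t)) * w t) t

noncomputable def recessiveFreq (x y w : ℝ → ℝ) (t : ℝ) : ℝ :=
  (w t + y t / 2) / (x t + y t + w t)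

namespace IsDOMSolution

variable {b d c β : ℝ} {x y w : ℝ → ℝ} {t : ℝ}

theorem total_pos (S : IsDOMSolution b d c β x y w) (ht : 0 ≤ t) : 0 < x t + y t + w t := by
  obtain ⟨hx, hy, hw⟩ := S.pos t ht
  positivity

theorem hasDerivAt_total (S : IsDOMSolution b d c β x y w) (ht : 0 ≤ t) :
    HasDerivAt (fun t => x t + y t + w t)
      ((b * β - d - c * (x t + y t + w t)
        - 2 * b * (β - 1) * w t * (x t + y t) / (x t + y t + w t) ^ 2) * (x t + y t + w t)) t := by
  have hN := ((S.hasDerivAt_x t ht).add (S.hasDerivAt_y t ht)).add (S.hasDerivAt_w t ht)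
  refine hN.congr_deriv ?_
  have := (S.total_pos ht).ne'
  field_simp
  ring

theorem hasDerivAt_w_sub_x (S : IsDOMSolution b d c β x y w) (ht : 0 ≤ t) :
    HasDerivAt (fun t => w t - x t)
      ((b * β - d - c * (x t + y t + w t)) * (w t - x t)
        - b * (β - 1) * w t * y t / (x t + y t + w t)) t := by
  refine ((S.hasDerivAt_w t ht).sub (S.hasDerivAt_x t ht)).congr_deriv ?_
  have := (S.total_pos ht).ne'
  field_simp
  ring

theorem hasDerivAt_recessiveFreq (S : IsDOMSolution b d c β x y w) (ht : 0 ≤ t) :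
    HasDerivAt (recessiveFreq x y w)
      (-(b * (β - 1) * (w t / (x t + y t + w t)) * (1 - recessiveFreq x y w t)
        * (1 - 2 * (w t / (x t + y t + w t))))) t := by
  have hN := ((S.hasDerivAt_x t ht).add (S.hasDerivAt_y t ht)).add (S.hasDerivAt_w t ht)
  refine (((S.hasDerivAt_w t ht).add ((S.hasDerivAt_y t ht).div_const 2)).div hN
    (S.total_pos ht).ne').congr_deriv ?_
  have := (S.total_pos ht).ne'
  simp only [recessiveFreq, Pi.add_apply]
  field_simp
  ring

theorem hasDerivAt_w_div_total (S : IsDOMSolution b d c β x y w) (ht : 0 ≤ t) :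
    HasDerivAt (fun t => w t / (x t + y t + w t))
      (b * β / 4 * (y t / (x t + y t + w t)) ^ 2
        + b * (w t / (x t + y t + w t)) * (y t / (x t + y t + w t))
        - b * β * (w t / (x t + y t + w t)) * ((x t + y t) / (x t + y t + w t))
        + 2 * b * (β - 1) * (w t / (x t + y t + w t)) ^ 2
          * ((x t + y t) / (x t + y t + w t))) t := by
  have hN := ((S.hasDerivAt_x t ht).add (S.hasDerivAt_y t ht)).add (S.hasDerivAt_w t ht)
  refine ((S.hasDerivAt_w t ht).div hN (S.total_pos ht).ne').congr_deriv ?_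
  have := (S.total_pos ht).ne'
  simp only [Pi.add_apply]
  field_simp
  ring

theorem recessiveFreq_pos (S : IsDOMSolution b d c β x y w) (ht : 0 ≤ t) :
    0 < recessiveFreq x y w t := by
  obtain ⟨hx, hy, hw⟩ := S.pos t ht
  unfold recessiveFreq
  positivity

theorem w_div_total_lt_recessiveFreq (S : IsDOMSolution b d c β x y w) (ht : 0 ≤ t) :
    w t / (x t + y t + w t) < recessiveFreq x y w t := by
  unfold recessiveFreq
  gcongr
  · exact S.total_pos ht
  · linarith [(S.pos t ht).2.1]

theorem w_le_x (S : IsDOMSolution b d c β x y w) (hb : 0 < b) (hβ : 1 < β) (h0 : w 0 ≤ x 0)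
    (ht : 0 ≤ t) : w t ≤ x t := by
  refine sub_nonpos.1 (le_of_hasDerivAt_neg_at_eq (fun s hs => S.hasDerivAt_w_sub_x hs)
    (sub_nonpos.2 h0) (fun s hs hs0 => ?_) t ht)
  obtain ⟨-, hy, hw⟩ := S.pos s hs
  have := S.total_pos hs
  have : 0 < β - 1 := by linarith
  rw [hs0, mul_zero, zero_sub, neg_lt_zero]
  positivity

theorem recessiveFreq_le_half (S : IsDOMSolution b d c β x y w) (hb : 0 < b) (hβ : 1 < β)
    (h0 : w 0 ≤ x 0) (ht : 0 ≤ t) : recessiveFreq x y w t ≤ 1 / 2 := by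
  rw [recessiveFreq, div_le_iff₀ (S.total_pos ht)]
  linarith [S.w_le_x hb hβ h0 ht]

theorem recessiveFreq_strictAntiOn (S : IsDOMSolution b d c β x y w) (hb : 0 < b)
    (hβ : 1 < β) (h0 : w 0 ≤ x 0) : StrictAntiOn (recessiveFreq x y w) (Ici 0) := by
  refine strictAntiOn_of_deriv_neg (convex_Ici 0)
    (fun s hs => (S.hasDerivAt_recessiveFreq hs).continuousAt.continuousWithinAt) ?_
  intro s hs
  rw [interior_Ici] at hs
  rw [(S.hasDerivAt_recessiveFreq hs.le).deriv, neg_lt_zero]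
  have hg := S.w_div_total_lt_recessiveFreq hs.le
  have hu := S.recessiveFreq_le_half hb hβ h0 hs.le
  have : 0 < w s / (x s + y s + w s) := div_pos (S.pos s hs.le).2.2 (S.total_pos hs.le)
  have : 0 < β - 1 := by linarith
  have : 0 < 1 - recessiveFreq x y w s := by linarith
  have : 0 < 1 - 2 * (w s / (x s + y s + w s)) := by linarith
  positivity

theorem exists_pos_le_w_div_total (S : IsDOMSolution b d c β x y w) (hb : 0 < b) (hβ : 1 < β)
    {δ T : ℝ} (hδ : 0 < δ) (hT : 0 ≤ T) (hu : ∀ t ≥ T, δ ≤ recessiveFreq x y w t) :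
    ∃ g₀ > 0, ∀ t ≥ T, g₀ ≤ w t / (x t + y t + w t) := by
  set g₀ := min (w T / (x T + y T + w T)) (min (δ / 2) (δ ^ 2 / 8))
  have hg₀ : 0 < g₀ :=
    lt_min (div_pos (S.pos T hT).2.2 (S.total_pos hT)) (lt_min (by positivity) (by positivity))
  refine ⟨g₀, hg₀, fun t ht => neg_le_neg_iff.1 ?_⟩
  refine le_of_hasDerivAt_neg_at_eq (f := fun t => -(w t / (x t + y t + w t)))
    (fun s hs => (S.hasDerivAt_w_div_total (hT.trans hs)).neg) (neg_le_neg (min_le_left _ _))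
    (fun s hs hgs => ?_) t ht
  have hs0 := hT.trans hs
  obtain ⟨hx, hy, hw⟩ := S.pos s hs0
  have hN := S.total_pos hs0
  have hus : δ ≤ w s / (x s + y s + w s) + y s / (x s + y s + w s) / 2 :=
    (hu s hs).trans_eq (by unfold recessiveFreq; ring)
  set G := w s / (x s + y s + w s)
  set Y := y s / (x s + y s + w s)
  set X := (x s + y s) / (x s + y s + w s)
  have hG : G = g₀ := neg_inj.1 hgs
  have hGδ : G ≤ δ / 2 := hG ▸ (min_le_right _ _).trans (min_le_left _ _)
  have hGδ2 : G ≤ δ ^ 2 / 8 := hG ▸ (min_le_right _ _).trans (min_le_right _ _)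
  have hY : δ ≤ Y := by linarith
  have hX : X ≤ 1 := (div_le_one hN).2 (by linarith)
  -- production of `aa` by `Aa × Aa` matings, at least `bβδ²/4`, beats the loss `bβ G X`
  have hgain : b * β / 4 * δ ^ 2 ≤ b * β / 4 * Y ^ 2 := by gcongr
  have hloss : b * β * G * X ≤ b * β * (δ ^ 2 / 8) := by
    have : G * X ≤ δ ^ 2 / 8 := (mul_le_of_le_one_right (hg₀.le.trans_eq hG.symm) hX).trans hGδ2
    calc b * β * G * X = b * β * (G * X) := by ring
      _ ≤ b * β * (δ ^ 2 / 8) := by gcongr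
  have hβ1 : 0 < β - 1 := by linarith
  have hGY : 0 ≤ b * G * Y := by positivity
  have hG2X : 0 ≤ 2 * b * (β - 1) * G ^ 2 * X := by positivity
  have hδ2 : 0 < b * β * δ ^ 2 := by positivity
  rw [neg_lt_zero]
  linarith

theorem eventually_recessiveFreq_lt (S : IsDOMSolution b d c β x y w) (hb : 0 < b) (hβ : 1 < β)
    (h0 : w 0 ≤ x 0) {δ : ℝ} (hδ : 0 < δ) : ∀ᶠ t in atTop, recessiveFreq x y w t < δ := by
  have hanti := S.recessiveFreq_strictAntiOn hb hβ h0
  by_cases hex : ∃ t₀ ≥ 0, recessiveFreq x y w t₀ < δ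
  · obtain ⟨t₀, ht₀, hut₀⟩ := hex
    filter_upwards [eventually_ge_atTop t₀] with t ht
    exact (hanti.antitoneOn ht₀ (ht₀.trans ht) ht).trans_lt hut₀
  push Not at hex
  exfalso
  obtain ⟨g₀, hg₀, hg⟩ := S.exists_pos_le_w_div_total hb hβ hδ le_rfl hex
  set u₁ := recessiveFreq x y w 1
  have hu₁ : u₁ < 1 / 2 :=
    (hanti (mem_Ici.2 le_rfl) (mem_Ici.2 zero_le_one) zero_lt_one).trans_le
      (S.recessiveFreq_le_half hb hβ h0 le_rfl)
  have hβ1 : 0 < β - 1 := by linarith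
  -- from time 1 on, `u ≤ u 1 < 1/2` keeps `1 - 2g` away from zero
  have hρ : 0 < b * (β - 1) * g₀ * (1 / 2) * (1 - 2 * u₁) := by
    have : 0 < 1 - 2 * u₁ := by linarith
    positivity
  have hneg := eventually_le_of_hasDerivAt_le_neg_s11 (a := 0) hρ
    (by filter_upwards [eventually_ge_atTop 0] with t ht using S.hasDerivAt_recessiveFreq ht)
    (by
      filter_upwards [eventually_ge_atTop 1] with t ht _
      have ht0 : (0 : ℝ) ≤ t := zero_le_one.trans ht
      have hut : recessiveFreq x y w t ≤ u₁ := hanti.antitoneOn (mem_Ici.2 zero_le_one) ht0 ht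
      have hgu := S.w_div_total_lt_recessiveFreq ht0
      have hhalf := S.recessiveFreq_le_half hb hβ h0 ht0
      have hG : 0 < w t / (x t + y t + w t) := div_pos (S.pos t ht0).2.2 (S.total_pos ht0)
      have hprod : g₀ * (1 / 2) ≤ w t / (x t + y t + w t) * (1 - recessiveFreq x y w t) :=
        mul_le_mul (hg t ht0) (by linarith) (by norm_num) hG.le
      rw [neg_le_neg_iff]
      calc b * (β - 1) * g₀ * (1 / 2) * (1 - 2 * u₁)
          = b * (β - 1) * (g₀ * (1 / 2)) * (1 - 2 * u₁) := by ring
        _ ≤ b * (β - 1) * (w t / (x t + y t + w t) * (1 - recessiveFreq x y w t))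
            * (1 - 2 * (w t / (x t + y t + w t))) := by
          gcongr
          · linarith
          · exact mul_nonneg (by positivity) (hprod.trans' (by positivity))
          · linarith
        _ = _ := by ring)
  obtain ⟨t, hut, ht⟩ := (hneg.and (eventually_ge_atTop 0)).exists
  exact (S.recessiveFreq_pos ht).not_ge hut

theorem tendsto_recessiveFreq (S : IsDOMSolution b d c β x y w) (hb : 0 < b) (hβ : 1 < β)
    (h0 : w 0 ≤ x 0) : Tendsto (recessiveFreq x y w) atTop (𝓝 0) :=
  tendsto_order.2 ⟨fun _ ha => (eventually_ge_atTop 0).mono fun _ ht =>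
    ha.trans (S.recessiveFreq_pos ht), fun _ hδ => S.eventually_recessiveFreq_lt hb hβ h0 hδ⟩

theorem tendsto_total (S : IsDOMSolution b d c β x y w) (hb : 0 < b) (hβ : 1 < β) (hc : 0 < c)
    (hbd : d < b * β) (h0 : w 0 ≤ x 0) :
    Tendsto (fun t => x t + y t + w t) atTop (𝓝 ((b * β - d) / c)) := by
  have hβ1 : 0 < β - 1 := by linarith
  have hε : ∀ t ≥ 0, 0 ≤ 2 * b * (β - 1) * w t * (x t + y t) / (x t + y t + w t) ^ 2 ∧
      2 * b * (β - 1) * w t * (x t + y t) / (x t + y t + w t) ^ 2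
        ≤ 2 * b * (β - 1) * recessiveFreq x y w t := by
    intro t ht
    obtain ⟨hx, hy, hw⟩ := S.pos t ht
    refine ⟨by positivity, ?_⟩
    have hxy : (x t + y t) / (x t + y t + w t) ≤ 1 :=
      (div_le_one (S.total_pos ht)).2 (by linarith)
    calc 2 * b * (β - 1) * w t * (x t + y t) / (x t + y t + w t) ^ 2
        = 2 * b * (β - 1) * (w t / (x t + y t + w t)) * ((x t + y t) / (x t + y t + w t)) := by
          field_simp
      _ ≤ 2 * b * (β - 1) * (w t / (x t + y t + w t)) :=
          mul_le_of_le_one_right (by positivity) hxy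
      _ ≤ 2 * b * (β - 1) * recessiveFreq x y w t := by
          gcongr
          exact (S.w_div_total_lt_recessiveFreq ht).le
  refine tendsto_of_hasDerivAt_logistic_s11 (sub_pos.2 hbd) hc
    ((eventually_ge_atTop 0).mono fun t ht => S.hasDerivAt_total ht)
    ((eventually_ge_atTop 0).mono fun t ht => S.total_pos ht)
    ((eventually_ge_atTop 0).mono fun t ht => (hε t ht).1) ?_
  refine tendsto_of_tendsto_of_tendsto_of_le_of_le' tendsto_const_nhds
    (by simpa using (S.tendsto_recessiveFreq hb hβ h0).const_mul (2 * b * (β - 1)))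
    ((eventually_ge_atTop 0).mono fun t ht => (hε t ht).1)
    ((eventually_ge_atTop 0).mono fun t ht => (hε t ht).2)

theorem recessiveFreq_mul_total (S : IsDOMSolution b d c β x y w) (ht : 0 ≤ t) :
    recessiveFreq x y w t * (x t + y t + w t) = w t + y t / 2 :=
  div_mul_cancel₀ _ (S.total_pos ht).ne'

end IsDOMSolution

/-- Let z = (x, y, w) : [0, ∞) → (0, ∞)³ be a global solution of the
one-patch DOM system. If x(0) ≥ w(0), then z(t) → (ζ, 0, 0) as t → ∞. -/
theorem dom_one_patch_convergence_A (b d c β : ℝ) (hdb : d < b) (hd : 0 < d) (hc : 0 < c)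
    (hβ : 1 < β) (x y w : ℝ → ℝ)
    (hpos : ∀ t : ℝ, 0 ≤ t → 0 < x t ∧ 0 < y t ∧ 0 < w t)
    (hx : ∀ t : ℝ, 0 ≤ t → HasDerivAt x
      (b * β / (x t + y t + w t) * (x t + y t / 2) ^ 2
        - (d + c * (x t + y t + w t)) * x t) t)
    (hy : ∀ t : ℝ, 0 ≤ t → HasDerivAt y
      (b / (x t + y t + w t) * (β * y t + 2 * w t) * (x t + y t / 2)
        - (d + c * (x t + y t + w t)) * y t) t)
    (hw : ∀ t : ℝ, 0 ≤ t → HasDerivAt w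
      (b / (x t + y t + w t) * (β * (w t) ^ 2 + w t * y t + (β / 4) * (y t) ^ 2)
        - (d + c * (x t + y t + w t)) * w t) t)
    (h0 : w 0 ≤ x 0) :
    Tendsto (fun t => (x t, y t, w t)) atTop (nhds (((b * β - d) / c, 0, 0) : ℝ × ℝ × ℝ)) := by
  have S : IsDOMSolution b d c β x y w := ⟨hpos, hx, hy, hw⟩
  have hb : 0 < b := hd.trans hdb
  have hN := S.tendsto_total hb hβ hc (by nlinarith) h0
  have huN : Tendsto (fun t => recessiveFreq x y w t * (x t + y t + w t)) atTop (𝓝 0) := by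
    simpa using (S.tendsto_recessiveFreq hb hβ h0).mul hN
  have hw0 : Tendsto w atTop (𝓝 0) :=
    tendsto_of_tendsto_of_tendsto_of_le_of_le' tendsto_const_nhds huN
      ((eventually_ge_atTop 0).mono fun t ht => (S.pos t ht).2.2.le)
      ((eventually_ge_atTop 0).mono fun t ht => by
        rw [S.recessiveFreq_mul_total ht]; linarith [(S.pos t ht).2.1])
  have hy0 : Tendsto y atTop (𝓝 0) :=
    tendsto_of_tendsto_of_tendsto_of_le_of_le' tendsto_const_nhds
      (by simpa using huN.const_mul 2)
      ((eventually_ge_atTop 0).mono fun t ht => (S.pos t ht).2.1.le)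
      ((eventually_ge_atTop 0).mono fun t ht => by
        rw [S.recessiveFreq_mul_total ht]; linarith [(S.pos t ht).2.2])
  have hx0 : Tendsto x atTop (𝓝 ((b * β - d) / c)) := by
    have h := (hN.sub hy0).sub hw0
    rw [sub_zero, sub_zero] at h
    exact h.congr fun t => by ring
  exact hx0.prodMk_nhds (hy0.prodMk_nhds hw0)
end

section
/- Along any solution (x, y, w) of the one-patch DOM system with positive coordinates, the identities (d/dt)N(t) = (bβ − d − cN(t))N(t) − 2b(β − 1)(x(t) + y(t))w(t)/N(t) and (d/dt)(x(t) − w(t)) = (x(t) − w(t))(bβ − d − cN(t)) + b(β − 1)y(t)w(t)/N(t) hold, where N = x + y + w. Consequently the set {x ≥ w} (intersected with the open positive octant) is invariant under the flow of the system. -/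
/-!
Both identities are algebra on the right-hand sides once `N ≠ 0`. For the invariance, note that on
the diagonal `x = w` the second identity reads `(x - w)' = b (β - 1) y w / N > 0`, so a solution
can never cross from `{w ≤ x}` into `{x < w}`; this is the fencing (barrier) principle for
differential inequalities.
-/

open Set

section DomRates

variable (b d c β x y w : ℝ)

noncomputable def domRateAA : ℝ :=
  b * β / (x + y + w) * (x + y / 2) ^ 2 - (d + c * (x + y + w)) * x

noncomputable def domRateAa : ℝ :=
  b / (x + y + w) * (β * y + 2 * w) * (x + y / 2) - (d + c * (x + y + w)) * y

noncomputable def domRateaa : ℝ :=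
  b / (x + y + w) * (β * w ^ 2 + w * y + (β / 4) * y ^ 2) - (d + c * (x + y + w)) * w

variable {b d c β x y w}

theorem domRateAA_add_domRateAa_add_domRateaa (hN : x + y + w ≠ 0) :
    domRateAA b d c β x y w + domRateAa b d c β x y w + domRateaa b d c β x y w =
      (b * β - d - c * (x + y + w)) * (x + y + w)
        - 2 * b * (β - 1) * (x + y) * w / (x + y + w) := by
  unfold domRateAA domRateAa domRateaa
  field_simp
  ring

theorem domRateAA_sub_domRateaa (hN : x + y + w ≠ 0) :
    domRateAA b d c β x y w - domRateaa b d c β x y w =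
      (x - w) * (b * β - d - c * (x + y + w)) + b * (β - 1) * y * w / (x + y + w) := by
  unfold domRateAA domRateaa
  field_simp
  ring

theorem domRateaa_lt_domRateAA_of_eq (hb : 0 < b) (hβ : 1 < β) (hy : 0 < y) (hw : 0 < w)
    (hxw : x = w) : domRateaa b d c β x y w < domRateAA b d c β x y w := by
  subst hxw
  have hN : 0 < x + y + x := by linarith
  have hgap := domRateAA_sub_domRateaa (b := b) (d := d) (c := c) (β := β) hN.ne'
  have hsource : 0 < b * (β - 1) * y * x / (x + y + x) := by
    have : 0 < β - 1 := by linarith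
    positivity
  rw [sub_self, zero_mul, zero_add] at hgap
  linarith

end DomRates

theorem le_of_hasDerivAt_of_lt_deriv_boundary {f f' B B' : ℝ → ℝ} {s t : ℝ} (hst : s ≤ t)
    (hf : ∀ r ∈ Icc s t, HasDerivAt f (f' r) r) (hB : ∀ r ∈ Icc s t, HasDerivAt B (B' r) r)
    (hs : f s ≤ B s) (bound : ∀ r ∈ Ico s t, f r = B r → f' r < B' r) : f t ≤ B t :=
  image_le_of_deriv_right_lt_deriv_boundary'
    (fun r hr => (hf r hr).continuousAt.continuousWithinAt)
    (fun r hr => (hf r (Ico_subset_Icc_self hr)).hasDerivWithinAt) hs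
    (fun r hr => (hB r hr).continuousAt.continuousWithinAt)
    (fun r hr => (hB r (Ico_subset_Icc_self hr)).hasDerivWithinAt) bound ⟨hst, le_rfl⟩

theorem dom_one_patch_identities_and_invariance_general (b d c β : ℝ)
    (hdb : d < b) (hd : 0 < d) (hβ : 1 < β) (x y w : ℝ → ℝ)
    (hpos : ∀ t : ℝ, 0 ≤ t → 0 < x t ∧ 0 < y t ∧ 0 < w t)
    (hx : ∀ t : ℝ, 0 ≤ t → HasDerivAt x
      (b * β / (x t + y t + w t) * (x t + y t / 2) ^ 2
        - (d + c * (x t + y t + w t)) * x t) t)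
    (hy : ∀ t : ℝ, 0 ≤ t → HasDerivAt y
      (b / (x t + y t + w t) * (β * y t + 2 * w t) * (x t + y t / 2)
        - (d + c * (x t + y t + w t)) * y t) t)
    (hw : ∀ t : ℝ, 0 ≤ t → HasDerivAt w
      (b / (x t + y t + w t) * (β * (w t) ^ 2 + w t * y t + (β / 4) * (y t) ^ 2)
        - (d + c * (x t + y t + w t)) * w t) t) :
    (∀ t : ℝ, 0 ≤ t → HasDerivAt (fun s => x s + y s + w s)
      ((b * β - d - c * (x t + y t + w t)) * (x t + y t + w t)
        - 2 * b * (β - 1) * (x t + y t) * w t / (x t + y t + w t)) t) ∧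
    (∀ t : ℝ, 0 ≤ t → HasDerivAt (fun s => x s - w s)
      ((x t - w t) * (b * β - d - c * (x t + y t + w t))
        + b * (β - 1) * y t * w t / (x t + y t + w t)) t) ∧
    (∀ s : ℝ, 0 ≤ s → w s ≤ x s → ∀ t : ℝ, s ≤ t → w t ≤ x t) := by
  have hN : ∀ t, 0 ≤ t → x t + y t + w t ≠ 0 := fun t ht => by
    obtain ⟨hx0, hy0, hw0⟩ := hpos t ht
    positivity
  refine ⟨fun t ht => ?_, fun t ht => ?_, fun s hs hws t hst => ?_⟩
  · exact (((hx t ht).add (hy t ht)).add (hw t ht)).congr_deriv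
      (domRateAA_add_domRateAa_add_domRateaa (hN t ht))
  · exact ((hx t ht).sub (hw t ht)).congr_deriv (domRateAA_sub_domRateaa (hN t ht))
  · have hb : 0 < b := hd.trans hdb
    refine le_of_hasDerivAt_of_lt_deriv_boundary hst (fun r hr => hw r (hs.trans hr.1))
      (fun r hr => hx r (hs.trans hr.1)) hws fun r hr hwx => ?_
    obtain ⟨-, hy0, hw0⟩ := hpos r (hs.trans hr.1)
    exact domRateaa_lt_domRateAA_of_eq hb hβ hy0 hw0 hwx.symm

/-- Along any solution (x, y, w) of the one-patch DOM system with positive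
coordinates, (d/dt)N = (bβ − d − cN)N − 2b(β − 1)(x + y)w/N and
(d/dt)(x − w) = (x − w)(bβ − d − cN) + b(β − 1)yw/N, where N = x + y + w.
Consequently the set {x ≥ w} (in the open positive octant) is invariant under the flow. -/
theorem dom_one_patch_identities_and_invariance (b d c β : ℝ)
    (hdb : d < b) (hd : 0 < d) (hc : 0 < c) (hβ : 1 < β) (x y w : ℝ → ℝ)
    (hpos : ∀ t : ℝ, 0 ≤ t → 0 < x t ∧ 0 < y t ∧ 0 < w t)
    (hx : ∀ t : ℝ, 0 ≤ t → HasDerivAt x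
      (b * β / (x t + y t + w t) * (x t + y t / 2) ^ 2
        - (d + c * (x t + y t + w t)) * x t) t)
    (hy : ∀ t : ℝ, 0 ≤ t → HasDerivAt y
      (b / (x t + y t + w t) * (β * y t + 2 * w t) * (x t + y t / 2)
        - (d + c * (x t + y t + w t)) * y t) t)
    (hw : ∀ t : ℝ, 0 ≤ t → HasDerivAt w
      (b / (x t + y t + w t) * (β * (w t) ^ 2 + w t * y t + (β / 4) * (y t) ^ 2)
        - (d + c * (x t + y t + w t)) * w t) t) :
    (∀ t : ℝ, 0 ≤ t → HasDerivAt (fun s => x s + y s + w s)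
      ((b * β - d - c * (x t + y t + w t)) * (x t + y t + w t)
        - 2 * b * (β - 1) * (x t + y t) * w t / (x t + y t + w t)) t) ∧
    (∀ t : ℝ, 0 ≤ t → HasDerivAt (fun s => x s - w s)
      ((x t - w t) * (b * β - d - c * (x t + y t + w t))
        + b * (β - 1) * y t * w t / (x t + y t + w t)) t) ∧
    (∀ s : ℝ, 0 ≤ s → w s ≤ x s → ∀ t : ℝ, s ≤ t → w t ≤ x t) :=
  dom_one_patch_identities_and_invariance_general b d c β hdb hd hβ x y w hpos hx hy hw
end

section
/- Let A, E, F be positive real numbers with AE > 2F. Then every complex root of the polynomial X³ + AX² + EX + F has negative real part. -/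
/-! Suppose `z = x + iy` is a root of `X³ + aX² + bX + c` with `x ≥ 0`. The imaginary part of the
cubic at `z` factors as `y (3x² + 2ax + b - y²)`. If `y = 0`, then `x` is a nonnegative real root,
impossible since `a, b ≥ 0` and `c > 0`. Otherwise `y² = 3x² + 2ax + b`, and substituting this into the real
part gives `8x³ + 8ax² + 2(a² + b)x + (ab - c) = 0`, which is impossible when `c < ab`. -/

namespace Complex

lemma re_cubic (a b c : ℝ) (z : ℂ) :
    (z ^ 3 + a * z ^ 2 + b * z + c).re =
      z.re ^ 3 - 3 * z.re * z.im ^ 2 + a * (z.re ^ 2 - z.im ^ 2) + b * z.re + c := by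
  simp only [pow_succ, pow_zero, one_mul, add_re, mul_re, mul_im, ofReal_re, ofReal_im]
  ring

lemma im_cubic (a b c : ℝ) (z : ℂ) :
    (z ^ 3 + a * z ^ 2 + b * z + c).im =
      z.im * (3 * z.re ^ 2 + 2 * a * z.re + b - z.im ^ 2) := by
  simp only [pow_succ, pow_zero, one_mul, add_im, mul_re, mul_im, ofReal_re, ofReal_im]
  ring

theorem re_neg_of_cubic_eq_zero {a b c : ℝ} (ha : 0 ≤ a) (hb : 0 ≤ b) (hc : 0 < c)
    (habc : c < a * b) {z : ℂ} (hz : z ^ 3 + a * z ^ 2 + b * z + c = 0) : z.re < 0 := by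
  by_contra! hx
  have hre := congrArg re hz
  have him := congrArg im hz
  rw [re_cubic, zero_re] at hre
  rw [im_cubic, zero_im] at him
  rcases mul_eq_zero.mp him with hy | hy
  · rw [hy] at hre
    have : 0 < z.re ^ 3 + a * z.re ^ 2 + b * z.re + c := by positivity
    linarith
  · have hy2 : z.im ^ 2 = 3 * z.re ^ 2 + 2 * a * z.re + b := by linarith
    have hsub : 8 * z.re ^ 3 + 8 * a * z.re ^ 2 + 2 * (a ^ 2 + b) * z.re + (a * b - c) = 0 := by
      linear_combination -hre - (3 * z.re + a) * hy2
    have : 0 < 8 * z.re ^ 3 + 8 * a * z.re ^ 2 + 2 * (a ^ 2 + b) * z.re + (a * b - c) := by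
      have : 0 < a * b - c := by linarith
      positivity
    linarith

end Complex

/-- Let A, E, F be positive real numbers with AE > 2F. Then every complex
root of X³ + AX² + EX + F has negative real part. -/
theorem cubic_routh_hurwitz (A E F : ℝ) (hA : 0 < A) (hE : 0 < E) (hF : 0 < F)
    (h : 2 * F < A * E) :
    ∀ z : ℂ, z ^ 3 + (A : ℂ) * z ^ 2 + (E : ℂ) * z + (F : ℂ) = 0 → z.re < 0 :=
  fun _ hz => Complex.re_neg_of_cubic_eq_zero hA.le hE.le hF (by linarith) hz
end

section
/- Let b > 0, β > 1, p > 0, and set A = b(3β − 1) + 3p, E = b²β(3β − 2) + 2bp(3β − 1) + 2p², F = b³β²(β − 1) + b²βp(3β − 2) + 2bp²(β − 1). Then AE − 2F = b³β(2 + 7β(β − 1)) + b²(2 + 7β(3β − 2))p + 4b(5β − 1)p² + 6p³ > 0, and every complex root of the polynomial X³ + AX² + EX + F has negative real part. -/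
/-! The cubic is handled by the Routh–Hurwitz criterion: for `A, F > 0` and `A E > F` no root lies
in the closed right half-plane. For a non-real root `x + i y` the imaginary part of the equation
gives `y² = 3x² + 2Ax + E`; substituting into the real part leaves
`-8x³ - 8Ax² - 2(E + A²)x = AE - F`, impossible for `x ≥ 0`. Writing `β = 1 + t`, the quantities
`A`, `F`, `AE - 2F` and `AE - F` become polynomials in `b, t, p` with positive coefficients. -/

lemma re_neg_of_cubic_eq_zero {A E F : ℝ} (hA : 0 < A) (hF : 0 < F) (hFAE : F < A * E) {z : ℂ}
    (hz : z ^ 3 + (A : ℂ) * z ^ 2 + (E : ℂ) * z + (F : ℂ) = 0) : z.re < 0 := by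
  obtain ⟨x, y⟩ := z
  have hre := congrArg Complex.re hz
  have him := congrArg Complex.im hz
  simp only [pow_succ, pow_zero, one_mul, Complex.add_re, Complex.add_im, Complex.mul_re,
    Complex.mul_im, Complex.ofReal_re, Complex.ofReal_im, Complex.zero_re, Complex.zero_im]
    at hre him
  simp only at hre him ⊢
  by_contra! hx
  have hE : 0 < E := pos_of_mul_pos_right (hF.trans hFAE) hA.le
  rcases eq_or_ne y 0 with rfl | hy
  · nlinarith [mul_nonneg hx hx, mul_nonneg (mul_nonneg hx hx) hx]
  · have hy2 : y ^ 2 = 3 * x ^ 2 + 2 * A * x + E := by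
      have : y * (3 * x ^ 2 - y ^ 2 + 2 * A * x + E) = 0 := by linear_combination him
      linarith [(mul_eq_zero.mp this).resolve_left hy]
    have hx_eq : -8 * x ^ 3 - 8 * A * x ^ 2 - 2 * (E + A ^ 2) * x = A * E - F := by
      linear_combination hre + (3 * x + A) * hy2
    nlinarith [mul_nonneg hx hx, mul_nonneg (mul_nonneg hx hx) hx]

/-- For b > 0, β > 1, p > 0 and A = b(3β − 1) + 3p,
E = b²β(3β − 2) + 2bp(3β − 1) + 2p², F = b³β²(β − 1) + b²βp(3β − 2) + 2bp²(β − 1), one has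
AE − 2F = b³β(2 + 7β(β − 1)) + b²(2 + 7β(3β − 2))p + 4b(5β − 1)p² + 6p³ > 0, and every
complex root of X³ + AX² + EX + F has negative real part. -/
theorem dom_differentiated_cubic_roots (b β p : ℝ) (hb : 0 < b) (hβ : 1 < β) (hp : 0 < p) :
    (b * (3 * β - 1) + 3 * p)
        * (b ^ 2 * β * (3 * β - 2) + 2 * b * p * (3 * β - 1) + 2 * p ^ 2)
      - 2 * (b ^ 3 * β ^ 2 * (β - 1) + b ^ 2 * β * p * (3 * β - 2)
          + 2 * b * p ^ 2 * (β - 1))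
      = b ^ 3 * β * (2 + 7 * β * (β - 1)) + b ^ 2 * (2 + 7 * β * (3 * β - 2)) * p
          + 4 * b * (5 * β - 1) * p ^ 2 + 6 * p ^ 3 ∧
    0 < b ^ 3 * β * (2 + 7 * β * (β - 1)) + b ^ 2 * (2 + 7 * β * (3 * β - 2)) * p
          + 4 * b * (5 * β - 1) * p ^ 2 + 6 * p ^ 3 ∧
    (∀ z : ℂ, z ^ 3 + ((b * (3 * β - 1) + 3 * p : ℝ) : ℂ) * z ^ 2
        + ((b ^ 2 * β * (3 * β - 2) + 2 * b * p * (3 * β - 1) + 2 * p ^ 2 : ℝ) : ℂ) * z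
        + ((b ^ 3 * β ^ 2 * (β - 1) + b ^ 2 * β * p * (3 * β - 2)
            + 2 * b * p ^ 2 * (β - 1) : ℝ) : ℂ) = 0 → z.re < 0) := by
  obtain ⟨t, ht, rfl⟩ : ∃ t, 0 < t ∧ β = 1 + t := ⟨β - 1, sub_pos.2 hβ, by ring⟩
  refine ⟨by ring, ?_, fun z hz => re_neg_of_cubic_eq_zero ?_ ?_ (sub_pos.1 ?_) hz⟩ <;>
    ring_nf <;> positivity
end

section
/- Let b > d > 0, c > 0, β ≥ 1, p ≥ 0, and let z₁, z₂ be positive real numbers satisfying 0 = (bβ − (d + c z₁))z₁ + p(z₂ − z₁) and 0 = (bβ − (d + c z₂))z₂ + p(z₁ − z₂). Then z₁ = z₂ = (bβ − d)/c. -/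
/-! Subtracting the two equilibrium equations gives
`(z₁ - z₂) (r - c (z₁ + z₂) - 2p) = 0` with `r = bβ - d`. If the second factor vanished, adding
the equations would give `0 = 2c z₁ z₂ + 2p (z₁ + z₂)`, impossible for positive sizes. So
`z₁ = z₂`, migration drops out, and each patch sits at the logistic carrying capacity `r / c`. -/

theorem eq_of_two_patch_migration_equilibrium {r c p z₁ z₂ : ℝ} (hc : 0 < c) (hp : 0 ≤ p)
    (hz₁ : 0 < z₁) (hz₂ : 0 < z₂)
    (h₁ : 0 = (r - c * z₁) * z₁ + p * (z₂ - z₁))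
    (h₂ : 0 = (r - c * z₂) * z₂ + p * (z₁ - z₂)) :
    z₁ = z₂ := by
  have hfactor : (z₁ - z₂) * (r - c * (z₁ + z₂) - 2 * p) = 0 := by
    linear_combination h₂ - h₁
  by_contra hne
  have hr : r - c * (z₁ + z₂) - 2 * p = 0 :=
    (mul_eq_zero.mp hfactor).resolve_left (sub_ne_zero.mpr hne)
  have hsum : 2 * c * z₁ * z₂ + 2 * p * (z₁ + z₂) = 0 := by
    linear_combination -(z₁ + z₂) * hr - h₁ - h₂
  have hpos : 0 < 2 * c * z₁ * z₂ + 2 * p * (z₁ + z₂) := by positivity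
  exact hpos.ne' hsum

theorem eq_div_of_logistic_equilibrium {r c z : ℝ} (hc : c ≠ 0) (hz : z ≠ 0)
    (h : (r - c * z) * z = 0) : z = r / c := by
  have hr : r - c * z = 0 := (mul_eq_zero.mp h).resolve_right hz
  rw [eq_div_iff hc]
  linarith

theorem monomorphic_two_patch_equilibrium_general (b d c β p z₁ z₂ : ℝ)
    (hc : 0 < c) (hp : 0 ≤ p)
    (hz₁ : 0 < z₁) (hz₂ : 0 < z₂)
    (heq1 : 0 = (b * β - (d + c * z₁)) * z₁ + p * (z₂ - z₁))
    (heq2 : 0 = (b * β - (d + c * z₂)) * z₂ + p * (z₁ - z₂)) :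
    z₁ = (b * β - d) / c ∧ z₂ = (b * β - d) / c := by
  have hz : z₁ = z₂ :=
    eq_of_two_patch_migration_equilibrium (r := b * β - d) hc hp hz₁ hz₂
      (by linear_combination heq1) (by linear_combination heq2)
  subst hz
  have hcap : z₁ = (b * β - d) / c :=
    eq_div_of_logistic_equilibrium hc.ne' hz₁.ne' (by linear_combination -heq1)
  exact ⟨hcap, hcap⟩

/-- Let b > d > 0, c > 0, β ≥ 1, p ≥ 0, and let z₁, z₂ > 0 satisfy
0 = (bβ − (d + cz₁))z₁ + p(z₂ − z₁) and 0 = (bβ − (d + cz₂))z₂ + p(z₁ − z₂).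
Then z₁ = z₂ = (bβ − d)/c. -/
theorem monomorphic_two_patch_equilibrium (b d c β p z₁ z₂ : ℝ)
    (hdb : d < b) (hd : 0 < d) (hc : 0 < c) (hβ : 1 ≤ β) (hp : 0 ≤ p)
    (hz₁ : 0 < z₁) (hz₂ : 0 < z₂)
    (heq1 : 0 = (b * β - (d + c * z₁)) * z₁ + p * (z₂ - z₁))
    (heq2 : 0 = (b * β - (d + c * z₂)) * z₂ + p * (z₁ - z₂)) :
    z₁ = (b * β - d) / c ∧ z₂ = (b * β - d) / c :=
  monomorphic_two_patch_equilibrium_general b d c β p z₁ z₂ hc hp hz₁ hz₂ heq1 heq2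
end
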